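/- arXiv:1910.08923 — 2 statements merged into one kernel-verified Lean document; each statement's English description precedes it below -/
import Mathlib

section
/- Let g ∈ 𝒢_m and let l be the Lebesgue measure of the fixed point set Fix(g) = {x ∈ [0,1) : g(x) = x}. Then there exists h ∈ 𝒢_m such that Fix(h∘g∘h⁻¹) = [0, l); moreover h∘g∘h⁻¹ ∈ 𝒢_{3m}. -/
/-- `f` is an interval exchange transformation (IET) of `[0,1)`, viewed as a permutation of `ℝ`
that fixes every point outside `[0,1)`: there is a finite subdivision
`0 = a 0 < a 1 < … < a (m+1) = 1` such that `f` is a translation on each half-open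
interval `[a i, a (i+1))`. -/
def IsIET (f : Equiv.Perm ℝ) : Prop :=
  (∀ x : ℝ, x ∉ Set.Ico (0 : ℝ) 1 → f x = x) ∧
  ∃ (m : ℕ) (a : Fin (m + 2) → ℝ),
    a 0 = 0 ∧ a (Fin.last (m + 1)) = 1 ∧ StrictMono a ∧
    ∀ i : Fin (m + 1), ∃ c : ℝ, ∀ x ∈ Set.Ico (a i.castSucc) (a i.succ), f x = x + c

/-- `f` is an interval exchange transformation with flips (FIET) of `[0,1)`, viewed as a
permutation of `ℝ` fixing every point outside `[0,1)`: there is a finite subdivision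
`0 = a 0 < a 1 < … < a (m+1) = 1` such that on each open interval `(a i, a (i+1))`, `f` is an
isometry, i.e. of the form `x ↦ x + c` or `x ↦ c - x`. -/
def IsFIET (f : Equiv.Perm ℝ) : Prop :=
  (∀ x : ℝ, x ∉ Set.Ico (0 : ℝ) 1 → f x = x) ∧
  ∃ (m : ℕ) (a : Fin (m + 2) → ℝ),
    a 0 = 0 ∧ a (Fin.last (m + 1)) = 1 ∧ StrictMono a ∧
    ∀ i : Fin (m + 1),
      (∃ c : ℝ, ∀ x ∈ Set.Ioo (a i.castSucc) (a i.succ), f x = x + c) ∨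
      (∃ c : ℝ, ∀ x ∈ Set.Ioo (a i.castSucc) (a i.succ), f x = c - x)

/-- Two permutations of `ℝ` agree outside a finite set; this is equality of the classes in the
quotient group `𝒢̄` of FIETs modulo maps that are the identity off a finite set. -/
def FEq (f g : Equiv.Perm ℝ) : Prop := {x : ℝ | f x ≠ g x}.Finite

open scoped commutatorElement in
/-- The set of commutators `⁅a, b⁆ = a * b * a⁻¹ * b⁻¹` of interval exchange
transformations. -/
def IETCommutators : Set (Equiv.Perm ℝ) :=
  {x | ∃ a b : Equiv.Perm ℝ, IsIET a ∧ IsIET b ∧ x = ⁅a, b⁆}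

open scoped commutatorElement in
/-- The set of commutators `⁅a, b⁆ = a * b * a⁻¹ * b⁻¹` of interval exchange
transformations with flips. -/
def FIETCommutators : Set (Equiv.Perm ℝ) :=
  {x | ∃ a b : Equiv.Perm ℝ, IsFIET a ∧ IsFIET b ∧ x = ⁅a, b⁆}

/-- `g` is a product of at most `n` commutators of elements of the group `𝒢` of interval
exchange transformations; i.e. the commutator length of `g` in `𝒢` is at most `n`. -/
def IsProdOfIETCommutators (n : ℕ) (g : Equiv.Perm ℝ) : Prop :=
  ∃ l : List (Equiv.Perm ℝ), l.length ≤ n ∧ (∀ x ∈ l, x ∈ IETCommutators) ∧ g = l.prod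

/-- `f ∈ 𝒢_m`: `f` is an IET of `[0,1)` admitting a subdivision into at most `m` half-open
intervals on each of which it is a translation. -/
def MemGm (m : ℕ) (f : Equiv.Perm ℝ) : Prop :=
  (∀ x : ℝ, x ∉ Set.Ico (0 : ℝ) 1 → f x = x) ∧
  ∃ (k : ℕ) (a : Fin (k + 2) → ℝ), k + 1 ≤ m ∧
    a 0 = 0 ∧ a (Fin.last (k + 1)) = 1 ∧ StrictMono a ∧
    ∀ i : Fin (k + 1), ∃ c : ℝ, ∀ x ∈ Set.Ico (a i.castSucc) (a i.succ), f x = x + c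

/-- `g` is periodic: every orbit `{gⁿ x : n ∈ ℤ}` is finite. -/
def IsPeriodicPerm (g : Equiv.Perm ℝ) : Prop :=
  ∀ x : ℝ, (Set.range fun n : ℤ => (g ^ n) x).Finite

/-- `f` is a restricted rotation: for some half-open interval `J = [a, b) ⊆ [0,1)` and some
`α ∈ [0, b - a)`, `f` is the identity outside `J` and sends `x ∈ J` to
`a + ((x - a + α) mod (b - a))`. -/
def IsRestrictedRotation (f : Equiv.Perm ℝ) : Prop :=
  ∃ a b α : ℝ, 0 ≤ a ∧ a < b ∧ b ≤ 1 ∧ α ∈ Set.Ico (0 : ℝ) (b - a) ∧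
    (∀ x : ℝ, x ∉ Set.Ico a b → f x = x) ∧
    ∀ x ∈ Set.Ico a b, f x = x + α - (b - a) * (⌊(x - a + α) / (b - a)⌋ : ℝ)

/-- `Δ_α`: the additive subgroup of `ℝ` generated by `α 0, …, α (p-1)` and `1`. -/
def Delta {p : ℕ} (α : Fin p → ℝ) : AddSubgroup ℝ :=
  AddSubgroup.closure (Set.range α ∪ {1})

/-- `g ∈ Γ_α`: `g` is an IET all of whose discontinuity points (as a map of `[0,1)`)
belong to the subgroup `Δ`. -/
def MemGamma (Δ : AddSubgroup ℝ) (g : Equiv.Perm ℝ) : Prop :=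
  IsIET g ∧
  ∀ x ∈ Set.Ico (0 : ℝ) 1, ¬ContinuousWithinAt (⇑g) (Set.Ico (0 : ℝ) 1) x → x ∈ Δ

/-- `g ∈ Γ_α(J)` for `J = [c, d)`: `g` is an IET supported in `[c, d)` all of whose
discontinuity points belong to `Δ`. -/
def MemGammaJ (Δ : AddSubgroup ℝ) (c d : ℝ) (g : Equiv.Perm ℝ) : Prop :=
  IsIET g ∧ (∀ x : ℝ, x ∉ Set.Ico c d → g x = x) ∧
  ∀ x ∈ Set.Ico (0 : ℝ) 1, ¬ContinuousWithinAt (⇑g) (Set.Ico (0 : ℝ) 1) x → x ∈ Δ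


/-!
Cut `[0,1)` at the discontinuities of `g` into pieces `I_i` on which `g` is a translation by
`c_i`, so that `Fix g` is the union of the pieces with `c_i = 0`. Let `h` translate the pieces
so that they are laid end to end in a new order: first those with `c_i = 0`, then the others,
each group in its original order. Then `Fix (h g h⁻¹) = h (Fix g)` is the initial segment of
`[0,1)` of length `|Fix g|`. The map `h` has the same cut points as `g`, so `h ∈ 𝒢_m`, and the
cut points of `h g h⁻¹` lie among the images under `h` of the left endpoints of the `I_i` and
of their preimages under `g`, so there are at most `2m` of them.
-/

open Set Function MeasureTheory

namespace IntervalExchange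

section Tiling

variable {ι : Type*}

def IsTiling (A len : ι → ℝ) : Prop :=
  Pairwise (Disjoint on fun i => Ico (A i) (A i + len i)) ∧
    ⋃ i, Ico (A i) (A i + len i) = Ico 0 1

variable {A len : ι → ℝ}

theorem IsTiling.eq_of_mem (hT : IsTiling A len) {x : ℝ} {i j : ι}
    (hi : x ∈ Ico (A i) (A i + len i)) (hj : x ∈ Ico (A j) (A j + len j)) : i = j := by
  by_contra hij
  exact disjoint_left.1 (hT.1 hij) hi hj

theorem IsTiling.exists_mem (hT : IsTiling A len) {x : ℝ} (hx : x ∈ Ico (0 : ℝ) 1) :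
    ∃ i, x ∈ Ico (A i) (A i + len i) :=
  mem_iUnion.1 (hT.2 ▸ hx)

theorem IsTiling.subset_Ico (hT : IsTiling A len) (i : ι) :
    Ico (A i) (A i + len i) ⊆ Ico 0 1 :=
  hT.2 ▸ subset_iUnion (fun i => Ico (A i) (A i + len i)) i

theorem IsTiling.exists_eq_zero (hT : IsTiling A len) (hlen : ∀ i, 0 < len i) :
    ∃ i, A i = 0 := by
  obtain ⟨i, hi⟩ := hT.exists_mem (left_mem_Ico.2 zero_lt_one)
  have hAi := hT.subset_Ico i (left_mem_Ico.2 (lt_add_of_pos_right _ (hlen i)))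
  exact ⟨i, le_antisymm hi.1 hAi.1⟩

theorem IsTiling.measureReal_biUnion (hT : IsTiling A len) (hlen : ∀ i, 0 ≤ len i)
    (s : Finset ι) : volume.real (⋃ i ∈ s, Ico (A i) (A i + len i)) = ∑ i ∈ s, len i := by
  rw [measureReal_biUnion_finset (hT.1.set_pairwise _) (fun _ _ => measurableSet_Ico)
    fun _ _ => measure_Ico_lt_top.ne]
  simp [Real.volume_real_Ico, hlen]

theorem IsTiling.setOf_apply_eq_self (hT : IsTiling A len) {f : ℝ → ℝ} {s : Finset ι}
    (hf : ∀ i, ∀ x ∈ Ico (A i) (A i + len i), f x = x ↔ i ∈ s) :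
    {x ∈ Ico (0 : ℝ) 1 | f x = x} = ⋃ i ∈ s, Ico (A i) (A i + len i) := by
  ext x
  simp only [mem_sep_iff, mem_iUnion, exists_prop]
  constructor
  · rintro ⟨hx, hfx⟩
    obtain ⟨i, hi⟩ := hT.exists_mem hx
    exact ⟨i, (hf i x hi).1 hfx, hi⟩
  · rintro ⟨i, his, hi⟩
    exact ⟨hT.subset_Ico i hi, (hf i x hi).2 his⟩

end Tiling

section Offset

variable {ι κ : Type*} [LinearOrder κ]

def offset (key : ι → κ) (len : ι → ℝ) (s : Finset ι) (i : ι) : ℝ :=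
  ∑ j ∈ s with key j < key i, len j

variable {key : ι → κ} {len : ι → ℝ}

theorem offset_add_le_offset (hlen : ∀ i, 0 ≤ len i) {s : Finset ι} {i j : ι} (hi : i ∈ s)
    (hij : key i < key j) : offset key len s i + len i ≤ offset key len s j := by
  classical
  rw [offset, add_comm, ← Finset.sum_insert (by simp)]
  refine Finset.sum_le_sum_of_subset_of_nonneg (fun k hk => ?_) fun k _ _ => hlen k
  rcases Finset.mem_insert.1 hk with rfl | hk
  · simp [hi, hij]
  · simp only [Finset.mem_filter] at hk ⊢
    exact ⟨hk.1, hk.2.trans hij⟩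

theorem offset_eq_of_subset {s t : Finset ι} {i : ι} (hts : t ⊆ s)
    (hpred : ∀ j ∈ s, key j < key i → j ∈ t) : offset key len s i = offset key len t i := by
  unfold offset
  congr 1
  ext j
  simp only [Finset.mem_filter]
  exact ⟨fun h => ⟨hpred j h.1 h.2, h.2⟩, fun h => ⟨hts h.1, h.2⟩⟩

theorem biUnion_offset (hkey : Injective key) (hlen : ∀ i, 0 ≤ len i) (s : Finset ι) :
    ⋃ i ∈ s, Ico (offset key len s i) (offset key len s i + len i) =
      Ico 0 (∑ i ∈ s, len i) := by
  classical
  induction s using Finset.induction_on_max_value key with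
  | empty => simp
  | insert a s ha hmax ih =>
    have hlt : ∀ j ∈ s, key j < key a := fun j hj =>
      (hmax j hj).lt_of_ne (hkey.ne (ne_of_mem_of_not_mem hj ha))
    have hs : ∀ i ∈ s, offset key len (insert a s) i = offset key len s i := fun i hi =>
      offset_eq_of_subset (Finset.subset_insert a s) fun j hj hji =>
        (Finset.mem_insert.1 hj).resolve_left (by rintro rfl; exact (hlt i hi).not_gt hji)
    have ha' : offset key len (insert a s) a = ∑ i ∈ s, len i := by
      rw [offset_eq_of_subset (Finset.subset_insert a s) fun j hj hja =>
        (Finset.mem_insert.1 hj).resolve_left (by rintro rfl; exact hja.false), offset,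
        Finset.filter_true_of_mem hlt]
    rw [Finset.set_biUnion_insert, ha', iUnion₂_congr fun i hi => by rw [hs i hi], ih,
      Finset.sum_insert ha, union_comm, add_comm (len a),
      Ico_union_Ico_eq_Ico (Finset.sum_nonneg fun i _ => hlen i) (le_add_of_nonneg_right (hlen a))]

theorem isTiling_offset [Fintype ι] (hkey : Injective key) (hlen : ∀ i, 0 ≤ len i)
    (hsum : ∑ i, len i = 1) : IsTiling (offset key len Finset.univ) len := by
  refine ⟨fun i j hij => ?_, by simpa [hsum] using biUnion_offset hkey hlen Finset.univ⟩
  rcases lt_or_gt_of_ne (hkey.ne hij) with h | h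
  · exact Ico_disjoint_Ico.2 <| (min_le_left _ _).trans <|
      (offset_add_le_offset hlen (Finset.mem_univ i) h).trans (le_max_right _ _)
  · exact Ico_disjoint_Ico.2 <| (min_le_right _ _).trans <|
      (offset_add_le_offset hlen (Finset.mem_univ j) h).trans (le_max_left _ _)

end Offset

section Subdivision

variable {n : ℕ}

theorem offset_subdivision (a : Fin (n + 2) → ℝ) (i : Fin (n + 1)) :
    offset id (fun j => a j.succ - a j.castSucc) Finset.univ i = a i.castSucc - a 0 := by
  have h := Fin.sum_Iic_sub i a
  rw [← Finset.Iio_insert, Finset.sum_insert (by simp)] at h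
  rw [offset]
  simp only [id, Finset.filter_gt_eq_Iio]
  linarith

theorem sum_subdivision (a : Fin (n + 2) → ℝ) :
    ∑ i : Fin (n + 1), (a i.succ - a i.castSucc) = a (Fin.last (n + 1)) - a 0 := by
  rw [← Fin.succ_last, ← Fin.sum_Iic_sub (Fin.last n) a]
  exact Finset.sum_congr (by ext; simp [Fin.le_last]) fun _ _ => rfl

theorem isTiling_subdivision {a : Fin (n + 2) → ℝ} (ha0 : a 0 = 0)
    (ha1 : a (Fin.last (n + 1)) = 1) (ha : Monotone a) :
    IsTiling (fun i : Fin (n + 1) => a i.castSucc) fun i => a i.succ - a i.castSucc := by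
  have hT := isTiling_offset injective_id (fun i => sub_nonneg.2 (ha (Fin.castSucc_le_succ i)))
    (by rw [sum_subdivision, ha0, ha1, sub_zero])
  convert hT using 2 with i
  rw [offset_subdivision, ha0, sub_zero]

end Subdivision

section BlockPerm

variable {ι : Type*} {A B len : ι → ℝ}

theorem sub_add_mem_Ico {x a b l : ℝ} (hx : x ∈ Ico a (a + l)) : x - a + b ∈ Ico b (b + l) :=
  ⟨by linarith [hx.1], by linarith [hx.2]⟩

variable (A B len) in
open Classical in
noncomputable def blockShift (x : ℝ) : ℝ :=
  if h : ∃ i, x ∈ Ico (A i) (A i + len i) then x - A h.choose + B h.choose else x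

theorem blockShift_of_mem (hA : IsTiling A len) {x : ℝ} {i : ι}
    (hx : x ∈ Ico (A i) (A i + len i)) : blockShift A B len x = x - A i + B i := by
  have h : ∃ i, x ∈ Ico (A i) (A i + len i) := ⟨i, hx⟩
  rw [blockShift, dif_pos h, hA.eq_of_mem h.choose_spec hx]

theorem blockShift_of_notMem (hA : IsTiling A len) {x : ℝ} (hx : x ∉ Ico (0 : ℝ) 1) :
    blockShift A B len x = x := by
  rw [blockShift, dif_neg]
  rintro ⟨i, hi⟩
  exact hx (hA.subset_Ico i hi)

theorem blockShift_blockShift (hA : IsTiling A len) (hB : IsTiling B len) (x : ℝ) :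
    blockShift B A len (blockShift A B len x) = x := by
  by_cases hx : x ∈ Ico (0 : ℝ) 1
  · obtain ⟨i, hi⟩ := hA.exists_mem hx
    rw [blockShift_of_mem hA hi, blockShift_of_mem hB (sub_add_mem_Ico hi)]
    ring
  · rw [blockShift_of_notMem hA hx, blockShift_of_notMem hB hx]

noncomputable def blockPerm (hA : IsTiling A len) (hB : IsTiling B len) : Equiv.Perm ℝ where
  toFun := blockShift A B len
  invFun := blockShift B A len
  left_inv := blockShift_blockShift hA hB
  right_inv := blockShift_blockShift hB hA

theorem blockPerm_apply (hA : IsTiling A len) (hB : IsTiling B len) {x : ℝ} {i : ι}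
    (hx : x ∈ Ico (A i) (A i + len i)) : blockPerm hA hB x = x + (B i - A i) := by
  rw [blockPerm, Equiv.coe_fn_mk, blockShift_of_mem hA hx]
  ring

theorem blockPerm_apply_of_notMem (hA : IsTiling A len) (hB : IsTiling B len) {x : ℝ}
    (hx : x ∉ Ico (0 : ℝ) 1) : blockPerm hA hB x = x :=
  blockShift_of_notMem hA hx

end BlockPerm

section PiecewiseTranslation

/-- `P` contains the cut points; the pieces are closed on the left, hence `Ioc`. -/
def IsPiecewiseTranslation (f : ℝ → ℝ) (P : Finset ℝ) : Prop :=
  ∀ x ∈ Ico (0 : ℝ) 1, ∀ y ∈ Ico (0 : ℝ) 1, x ≤ y → (∀ p ∈ P, p ∉ Ioc x y) →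
    f y - y = f x - x

theorem IsPiecewiseTranslation.mono {f : ℝ → ℝ} {P Q : Finset ℝ}
    (hf : IsPiecewiseTranslation f P) (hPQ : P ⊆ Q) : IsPiecewiseTranslation f Q :=
  fun x hx y hy hxy hQ => hf x hx y hy hxy fun p hp => hQ p (hPQ hp)

theorem mem_fixingSubgroup_compl_iff {α : Type*} {f : Equiv.Perm α} {s : Set α} :
    f ∈ fixingSubgroup (Equiv.Perm α) sᶜ ↔ ∀ x ∉ s, f x = x :=
  mem_fixingSubgroup_iff _

theorem IsPiecewiseTranslation.comp {f g : Equiv.Perm ℝ} {P Q : Finset ℝ}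
    (hf0 : f ∈ fixingSubgroup (Equiv.Perm ℝ) (Ico (0 : ℝ) 1)ᶜ)
    (hf : IsPiecewiseTranslation f P) (hg : IsPiecewiseTranslation g Q) :
    IsPiecewiseTranslation ⇑(g * f) (P ∪ Q.image ⇑f⁻¹) := by
  intro x hx y hy hxy hPQ
  have hfz : ∀ z ∈ Icc x y, f z = z + (f x - x) := fun z hz => by
    have := hf x hx z ⟨hx.1.trans hz.1, hz.2.trans_lt hy.2⟩ hz.1 fun p hp hpz =>
      hPQ p (Finset.mem_union_left _ hp) ⟨hpz.1, hpz.2.trans hz.2⟩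
    linarith
  have hfy := hfz y ⟨hxy, le_rfl⟩
  have hmaps : ∀ z ∈ Ico (0 : ℝ) 1, f z ∈ Ico (0 : ℝ) 1 := fun z hz =>
    orbit_fixingSubgroup_compl_subset _ _ hz ⟨⟨f, hf0⟩, rfl⟩
  have key := hg (f x) (hmaps x hx) (f y) (hmaps y hy) (by linarith) fun q hq hqf => by
    rw [hfy] at hqf
    have hz : q - (f x - x) ∈ Ioc x y := ⟨by linarith [hqf.1], by linarith [hqf.2]⟩
    have hfq : f⁻¹ q = q - (f x - x) := by
      rw [Equiv.Perm.inv_eq_iff_eq, hfz _ (Ioc_subset_Icc_self hz)]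
      ring
    exact hPQ _ (Finset.mem_union_right _ (Finset.mem_image_of_mem _ hq)) (hfq ▸ hz)
  simp only [Equiv.Perm.mul_apply]
  linarith

theorem IsTiling.isPiecewiseTranslation {ι : Type*} [Fintype ι] {A len c : ι → ℝ}
    (hT : IsTiling A len) {f : ℝ → ℝ}
    (hf : ∀ i, ∀ x ∈ Ico (A i) (A i + len i), f x = x + c i) :
    IsPiecewiseTranslation f (Finset.univ.image A) := by
  intro x hx y hy hxy hP
  obtain ⟨i, hxi⟩ := hT.exists_mem hx
  obtain ⟨j, hyj⟩ := hT.exists_mem hy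
  have hjx : A j ≤ x := not_lt.1 fun h =>
    hP (A j) (Finset.mem_image_of_mem _ (Finset.mem_univ j)) ⟨h, hyj.1⟩
  obtain rfl : i = j := hT.eq_of_mem hxi ⟨hjx, hxy.trans_lt hyj.2⟩
  rw [hf i x hxi, hf i y hyj]
  ring

theorem IsPiecewiseTranslation.filter_mem_Ioo {f : ℝ → ℝ} {P : Finset ℝ}
    (hf : IsPiecewiseTranslation f P) :
    IsPiecewiseTranslation f (P.filter (· ∈ Ioo (0 : ℝ) 1)) :=
  fun x hx y hy hxy hP => hf x hx y hy hxy fun p hp hpxy =>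
    hP p (Finset.mem_filter.2 ⟨hp, hx.1.trans_lt hpxy.1, hpxy.2.trans_lt hy.2⟩) hpxy

theorem memGm_of_isPiecewiseTranslation_of_subset_Icc {f : Equiv.Perm ℝ} {Q : Finset ℝ}
    {N : ℕ} (hf0 : ∀ x ∉ Ico (0 : ℝ) 1, f x = x) (hf : IsPiecewiseTranslation f Q)
    (hQ : ∀ q ∈ Q, q ∈ Icc (0 : ℝ) 1) (h0 : 0 ∈ Q) (h1 : 1 ∈ Q)
    (hN : Q.card ≤ N + 1) : MemGm N f := by
  have hQ2 : 2 ≤ Q.card := by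
    simpa using Finset.card_le_card (Finset.insert_subset h0 (Finset.singleton_subset_iff.2 h1))
  have hcard : Q.card = Q.card - 2 + 2 := by omega
  set b := Q.orderEmbOfFin hcard
  have hbQ : ∀ i, b i ∈ Icc (0 : ℝ) 1 := fun i => hQ _ (Finset.orderEmbOfFin_mem Q hcard i)
  have hb0 : b 0 = 0 := by
    rw [show b 0 = Q.min' _ from Finset.orderEmbOfFin_zero hcard (by omega)]
    exact le_antisymm (Finset.min'_le _ _ h0) (hQ _ (Finset.min'_mem _ _)).1
  have hb1 : b (Fin.last _) = 1 := by
    rw [show b (Fin.last _) = Q.max' _ from Finset.orderEmbOfFin_last hcard (by omega)]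
    exact le_antisymm (hQ _ (Finset.max'_mem _ _)).2 (Finset.le_max' _ _ h1)
  refine ⟨hf0, Q.card - 2, b, by omega, hb0, hb1, b.strictMono,
    fun i => ⟨f (b i.castSucc) - b i.castSucc, fun x hx => ?_⟩⟩
  have hx1 : x < 1 := hx.2.trans_le (hbQ _).2
  have hbx := hf (b i.castSucc) ⟨(hbQ _).1, hx.1.trans_lt hx1⟩ x ⟨(hbQ _).1.trans hx.1, hx1⟩
    hx.1 fun p hp hpx => ?_
  · linarith
  obtain ⟨j, rfl⟩ : p ∈ range b := (Finset.range_orderEmbOfFin Q hcard).symm ▸ hp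
  have hij : i.succ ≤ j := Fin.castSucc_lt_iff_succ_le.1 (b.lt_iff_lt.1 hpx.1)
  exact (b.monotone hij).not_gt (hpx.2.trans_lt hx.2)

theorem memGm_of_isPiecewiseTranslation {f : Equiv.Perm ℝ} {P : Finset ℝ} {N : ℕ}
    (hf0 : ∀ x ∉ Ico (0 : ℝ) 1, f x = x) (hf : IsPiecewiseTranslation f P)
    (hN : (P.erase 0).card < N) : MemGm N f := by
  classical
  refine memGm_of_isPiecewiseTranslation_of_subset_Icc hf0
    (hf.filter_mem_Ioo.mono ((Finset.subset_insert _ _).trans (Finset.subset_insert _ _)))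
    (fun q hq => ?_) (Finset.mem_insert_self 0 _)
    (Finset.mem_insert_of_mem (Finset.mem_insert_self 1 _)) ?_
  · simp only [Finset.mem_insert, Finset.mem_filter] at hq
    rcases hq with rfl | rfl | ⟨-, hq⟩
    · exact left_mem_Icc.2 zero_le_one
    · exact right_mem_Icc.2 zero_le_one
    · exact Ioo_subset_Icc_self hq
  · have hfilter : P.filter (· ∈ Ioo (0 : ℝ) 1) ⊆ P.erase 0 := fun p hp =>
      Finset.mem_erase.2 ⟨(Finset.mem_filter.1 hp).2.1.ne', (Finset.mem_filter.1 hp).1⟩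
    have := Finset.card_insert_le (0 : ℝ) (insert 1 (P.filter (· ∈ Ioo (0 : ℝ) 1)))
    have := Finset.card_insert_le (1 : ℝ) (P.filter (· ∈ Ioo (0 : ℝ) 1))
    have := Finset.card_le_card hfilter
    omega

end PiecewiseTranslation

section Conjugation

variable {ι : Type*} {A B len c : ι → ℝ} {g : Equiv.Perm ℝ}

theorem blockPerm_mem_fixingSubgroup (hA : IsTiling A len) (hB : IsTiling B len) :
    blockPerm hA hB ∈ fixingSubgroup (Equiv.Perm ℝ) (Ico (0 : ℝ) 1)ᶜ :=
  mem_fixingSubgroup_compl_iff.2 fun _ hx => blockPerm_apply_of_notMem hA hB hx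

theorem memGm_blockPerm [Fintype ι] (hA : IsTiling A len) (hB : IsTiling B len)
    (hlen : ∀ i, 0 < len i) {N : ℕ} (hN : Fintype.card ι ≤ N) :
    MemGm N (blockPerm hA hB) := by
  refine memGm_of_isPiecewiseTranslation (fun x hx => blockPerm_apply_of_notMem hA hB hx)
    (hA.isPiecewiseTranslation fun i x hx => blockPerm_apply hA hB hx) ?_
  obtain ⟨i, hi⟩ := hA.exists_eq_zero hlen
  calc _ < (Finset.univ.image A).card :=
        Finset.card_erase_lt_of_mem (hi ▸ Finset.mem_image_of_mem A (Finset.mem_univ i))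
    _ ≤ N := Finset.card_image_le.trans hN

theorem blockPerm_conj_apply_eq_self_iff (hA : IsTiling A len) (hB : IsTiling B len)
    (hgA : ∀ i, ∀ x ∈ Ico (A i) (A i + len i), g x = x + c i) {y : ℝ} {i : ι}
    (hy : y ∈ Ico (B i) (B i + len i)) :
    (blockPerm hA hB * g * (blockPerm hA hB)⁻¹) y = y ↔ c i = 0 := by
  set h := blockPerm hA hB
  have hx := sub_add_mem_Ico (b := A i) hy
  have hhx : h (y - B i + A i) = y := by rw [blockPerm_apply hA hB hx]; ring
  have hinv : h⁻¹ y = y - B i + A i := by rw [Equiv.Perm.inv_eq_iff_eq, hhx]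
  rw [Equiv.Perm.mul_apply, Equiv.Perm.mul_apply, hinv, hgA i _ hx]
  conv_lhs => rhs; rw [← hhx]
  rw [h.injective.eq_iff, add_eq_left]

theorem isPiecewiseTranslation_blockPerm_conj [Fintype ι] (hA : IsTiling A len)
    (hB : IsTiling B len) (hlen : ∀ i, 0 < len i)
    (hg0 : g ∈ fixingSubgroup (Equiv.Perm ℝ) (Ico (0 : ℝ) 1)ᶜ)
    (hgA : ∀ i, ∀ x ∈ Ico (A i) (A i + len i), g x = x + c i) :
    IsPiecewiseTranslation ⇑(blockPerm hA hB * g * (blockPerm hA hB)⁻¹)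
      (Finset.univ.image B ∪ (Finset.univ.image A).image ⇑(blockPerm hA hB * g⁻¹)) := by
  set h := blockPerm hA hB
  have hh0 := blockPerm_mem_fixingSubgroup hA hB
  have hhA : (Finset.univ.image A).image h = Finset.univ.image B := by
    rw [Finset.image_image]
    refine Finset.image_congr fun i _ => ?_
    rw [comp_apply, blockPerm_apply hA hB (left_mem_Ico.2 (lt_add_of_pos_right _ (hlen i)))]
    ring
  have hgh : IsPiecewiseTranslation ⇑(g * h⁻¹) (Finset.univ.image B) := by
    have := (hB.isPiecewiseTranslation fun i y hy => blockPerm_apply hB hA hy).comp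
      (inv_mem hh0) (hA.isPiecewiseTranslation hgA)
    rwa [inv_inv, hhA, Finset.union_self] at this
  have := hgh.comp (mul_mem hg0 (inv_mem hh0))
    (hA.isPiecewiseTranslation fun i x hx => blockPerm_apply hA hB hx)
  rwa [mul_inv_rev, inv_inv, ← mul_assoc] at this

theorem memGm_blockPerm_conj [Fintype ι] (hA : IsTiling A len) (hB : IsTiling B len)
    (hlen : ∀ i, 0 < len i) (hg0 : g ∈ fixingSubgroup (Equiv.Perm ℝ) (Ico (0 : ℝ) 1)ᶜ)
    (hgA : ∀ i, ∀ x ∈ Ico (A i) (A i + len i), g x = x + c i) {N : ℕ}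
    (hN : 2 * Fintype.card ι < N) : MemGm N (blockPerm hA hB * g * (blockPerm hA hB)⁻¹) := by
  set h := blockPerm hA hB
  have hh0 := blockPerm_mem_fixingSubgroup hA hB
  refine memGm_of_isPiecewiseTranslation
    (mem_fixingSubgroup_compl_iff.1 (mul_mem (mul_mem hh0 hg0) (inv_mem hh0)))
    (isPiecewiseTranslation_blockPerm_conj hA hB hlen hg0 hgA) (lt_of_le_of_lt ?_ hN)
  calc _ ≤ _ := Finset.card_erase_le
    _ ≤ _ := Finset.card_union_le _ _
    _ ≤ Fintype.card ι + Fintype.card ι :=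
        add_le_add Finset.card_image_le (Finset.card_image_le.trans Finset.card_image_le)
    _ = 2 * Fintype.card ι := (two_mul _).symm

end Conjugation

section Sorting

variable {ι : Type*}

/-- As `false < true`, the indices with `c i = 0` come first, each group in the order of `ι`. -/
noncomputable def sortKey (c : ι → ℝ) (i : ι) : Bool ×ₗ ι :=
  toLex (decide (c i ≠ 0), i)

theorem sortKey_injective (c : ι → ℝ) : Injective (sortKey c) :=
  fun _ _ h => congrArg Prod.snd (toLex.injective h)

variable [LinearOrder ι]

theorem eq_zero_of_sortKey_lt {c : ι → ℝ} {i j : ι} (hi : c i = 0)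
    (hji : sortKey c j < sortKey c i) : c j = 0 := by
  simp only [sortKey, Prod.Lex.toLex_lt_toLex, hi, ne_eq, not_true_eq_false, decide_false] at hji
  rcases hji with h | ⟨h, -⟩
  · exact absurd h not_lt_bot
  · simpa using h

theorem biUnion_offset_sortKey [Fintype ι] {len : ι → ℝ} (hlen : ∀ i, 0 ≤ len i)
    (c : ι → ℝ) :
    ⋃ i ∈ Finset.univ.filter (c · = 0),
        Ico (offset (sortKey c) len Finset.univ i) (offset (sortKey c) len Finset.univ i + len i) =
      Ico 0 (∑ i with c i = 0, len i) := by
  rw [← biUnion_offset (sortKey_injective c) hlen]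
  refine iUnion₂_congr fun i hi => ?_
  rw [offset_eq_of_subset (key := sortKey c) (Finset.filter_subset _ _) fun j _ hj =>
    Finset.mem_filter.2
      ⟨Finset.mem_univ j, eq_zero_of_sortKey_lt (Finset.mem_filter.1 hi).2 hj⟩]

end Sorting

end IntervalExchange

open IntervalExchange

open MeasureTheory in
/-- Any `g ∈ 𝒢_m` is conjugate, by an element of `𝒢_m`, to an IET whose fixed point set is
exactly `[0, l)`, where `l = |Fix(g)|`; moreover the conjugate lies in `𝒢_{3m}`. -/
theorem conjugate_fix_to_initial_interval (m : ℕ) (g : Equiv.Perm ℝ) (hg : MemGm m g) :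
    ∃ h : Equiv.Perm ℝ, MemGm m h ∧
      {x ∈ Set.Ico (0 : ℝ) 1 | (h * g * h⁻¹) x = x} =
        Set.Ico (0 : ℝ) ((volume {x ∈ Set.Ico (0 : ℝ) 1 | g x = x}).toReal) ∧
      MemGm (3 * m) (h * g * h⁻¹) := by
  obtain ⟨hg0, k, a, hkm, ha0, ha1, ha, hc⟩ := hg
  choose c hc using hc
  set len : Fin (k + 1) → ℝ := fun i => a i.succ - a i.castSucc
  have hlen : ∀ i, 0 < len i := fun i => sub_pos.2 (ha Fin.castSucc_lt_succ)
  have hA : IsTiling (fun i => a i.castSucc) len := isTiling_subdivision ha0 ha1 ha.monotone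
  have hB : IsTiling (offset (sortKey c) len Finset.univ) len :=
    isTiling_offset (sortKey_injective c) (fun i => (hlen i).le)
      (by rw [sum_subdivision, ha0, ha1, sub_zero])
  have hgA : ∀ i, ∀ x ∈ Ico (a i.castSucc) (a i.castSucc + len i), g x = x + c i :=
    fun i x hx => hc i x (by simpa [len] using hx)
  have hfix_g := hA.setOf_apply_eq_self (f := g) (s := Finset.univ.filter (c · = 0))
    fun i x hx => by simp [hgA i x hx]
  have hfix_conj := hB.setOf_apply_eq_self (f := ⇑(blockPerm hA hB * g * (blockPerm hA hB)⁻¹))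
    (s := Finset.univ.filter (c · = 0)) fun i y hy =>
      (blockPerm_conj_apply_eq_self_iff hA hB hgA hy).trans (by simp)
  refine ⟨blockPerm hA hB, memGm_blockPerm hA hB hlen (by rwa [Fintype.card_fin]), ?_,
    memGm_blockPerm_conj hA hB hlen (mem_fixingSubgroup_compl_iff.2 hg0) hgA
      (by rw [Fintype.card_fin]; omega)⟩
  rw [hfix_conj, biUnion_offset_sortKey (fun i => (hlen i).le), ← measureReal_def, hfix_g,
    hA.measureReal_biUnion fun i => (hlen i).le]
end

section
/- Let ε ∈ (0,1), let J ⊆ [0,1) be a half-open interval with endpoints in Δ_α, and let f ∈ Γ_α(J), i.e. f ∈ 𝒢 with supp(f) ⊆ J and all discontinuity points of f in Δ_α. Then there exists an involution i ∈ Γ_α(J) such that |Fix(i∘f) ∩ J| ≥ |Fix(f) ∩ J| + (|J| − |Fix(f) ∩ J|)·(1−ε)/5, where |·| denotes Lebesgue measure and Fix(g) = {x : g(x) = x}. -/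
-- === Auxiliary development ===

open Set MeasureTheory

/-- A finite union of half-open intervals with endpoints in `Δ`. -/
def NiceSet (Δ : AddSubgroup ℝ) (E : Set ℝ) : Prop :=
  ∃ s : Finset (ℝ × ℝ), (∀ p ∈ s, p.1 ∈ Δ ∧ p.2 ∈ Δ) ∧ E = ⋃ p ∈ s, Set.Ico p.1 p.2

namespace NiceSet

variable {Δ : AddSubgroup ℝ} {E F : Set ℝ}

theorem empty : NiceSet Δ (∅ : Set ℝ) := ⟨∅, by simp, by simp⟩

theorem ico {a b : ℝ} (ha : a ∈ Δ) (hb : b ∈ Δ) : NiceSet Δ (Set.Ico a b) :=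
  ⟨{(a, b)}, by simp [ha, hb], by simp⟩

theorem union (hE : NiceSet Δ E) (hF : NiceSet Δ F) : NiceSet Δ (E ∪ F) := by
  obtain ⟨s, hs, rfl⟩ := hE
  obtain ⟨t, ht, rfl⟩ := hF
  refine ⟨s ∪ t, ?_, ?_⟩
  · intro p hp
    rcases Finset.mem_union.1 hp with h | h
    exacts [hs p h, ht p h]
  · ext x
    simp only [Set.mem_union, Set.mem_iUnion, Finset.mem_union, exists_prop]
    constructor
    · rintro (⟨p, hp, hx⟩ | ⟨p, hp, hx⟩)
      exacts [⟨p, Or.inl hp, hx⟩, ⟨p, Or.inr hp, hx⟩]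
    · rintro ⟨p, hp | hp, hx⟩
      exacts [Or.inl ⟨p, hp, hx⟩, Or.inr ⟨p, hp, hx⟩]

theorem inter (hE : NiceSet Δ E) (hF : NiceSet Δ F) : NiceSet Δ (E ∩ F) := by
  obtain ⟨s, hs, rfl⟩ := hE
  obtain ⟨t, ht, rfl⟩ := hF
  refine ⟨(s ×ˢ t).image fun q => (max q.1.1 q.2.1, min q.1.2 q.2.2), ?_, ?_⟩
  · intro p hp
    simp only [Finset.mem_image, Finset.mem_product] at hp
    obtain ⟨q, ⟨hq1, hq2⟩, rfl⟩ := hp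
    obtain ⟨h1, h2⟩ := hs _ hq1
    obtain ⟨h3, h4⟩ := ht _ hq2
    constructor
    · rcases max_cases q.1.1 q.2.1 with ⟨h, _⟩ | ⟨h, _⟩ <;> rw [h] <;> assumption
    · rcases min_cases q.1.2 q.2.2 with ⟨h, _⟩ | ⟨h, _⟩ <;> rw [h] <;> assumption
  · ext x
    simp only [Set.mem_inter_iff, Set.mem_iUnion, Finset.mem_image, Finset.mem_product,
      Set.mem_Ico, exists_prop]
    constructor
    · rintro ⟨⟨p, hp, hx1, hx2⟩, ⟨q, hq, hy1, hy2⟩⟩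
      exact ⟨(max p.1 q.1, min p.2 q.2), ⟨(p, q), ⟨hp, hq⟩, rfl⟩, max_le hx1 hy1,
        lt_min hx2 hy2⟩
    · rintro ⟨r, ⟨⟨p, q⟩, ⟨hp, hq⟩, rfl⟩, hx1, hx2⟩
      simp only [max_le_iff] at hx1
      simp only [lt_min_iff] at hx2
      exact ⟨⟨p, hp, hx1.1, hx2.1⟩, ⟨q, hq, hx1.2, hx2.2⟩⟩

theorem diff_ico (hE : NiceSet Δ E) {a b : ℝ} (ha : a ∈ Δ) (hb : b ∈ Δ) :
    NiceSet Δ (E \ Set.Ico a b) := by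
  obtain ⟨s, hs, rfl⟩ := hE
  refine ⟨(s.image fun p => (p.1, min p.2 a)) ∪ (s.image fun p => (max p.1 b, p.2)), ?_, ?_⟩
  · intro p hp
    rcases Finset.mem_union.1 hp with h | h <;>
      · simp only [Finset.mem_image] at h
        obtain ⟨q, hq, rfl⟩ := h
        obtain ⟨h1, h2⟩ := hs _ hq
        constructor
        · first
          | exact h1
          | rcases max_cases q.1 b with ⟨h, _⟩ | ⟨h, _⟩ <;> rw [h] <;> assumption
        · first
          | exact h2
          | rcases min_cases q.2 a with ⟨h, _⟩ | ⟨h, _⟩ <;> rw [h] <;> assumption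
  · ext x
    simp only [Set.mem_diff, Set.mem_iUnion, Set.mem_Ico, exists_prop, Finset.mem_union,
      Finset.mem_image, not_and, not_lt]
    constructor
    · rintro ⟨⟨p, hp, hx1, hx2⟩, hnot⟩
      by_cases hxa : x < a
      · exact ⟨(p.1, min p.2 a), Or.inl ⟨p, hp, rfl⟩, hx1, lt_min hx2 hxa⟩
      · push_neg at hxa
        have hxb : b ≤ x := hnot hxa
        exact ⟨(max p.1 b, p.2), Or.inr ⟨p, hp, rfl⟩, max_le hx1 hxb, hx2⟩
    · rintro ⟨r, hr | hr, hx1, hx2⟩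
      · obtain ⟨q, hq, rfl⟩ := hr
        simp only [lt_min_iff] at hx2
        exact ⟨⟨q, hq, hx1, hx2.1⟩, fun h => absurd hx2.2 (not_lt.2 h)⟩
      · obtain ⟨q, hq, rfl⟩ := hr
        simp only [max_le_iff] at hx1
        exact ⟨⟨q, hq, hx1.1, hx2⟩, fun _ => hx1.2⟩

theorem diff (hE : NiceSet Δ E) (hF : NiceSet Δ F) : NiceSet Δ (E \ F) := by
  obtain ⟨t, ht, rfl⟩ := hF
  classical
  induction t using Finset.induction_on generalizing E with
  | empty => simpa using hE
  | insert q t' hq ih =>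
    have : E \ ⋃ p ∈ insert q t', Set.Ico p.1 p.2
        = (E \ Set.Ico q.1 q.2) \ ⋃ p ∈ t', Set.Ico p.1 p.2 := by
      simp only [Finset.mem_insert, Set.iUnion_iUnion_eq_or_left]
      rw [Set.diff_diff]
    rw [this]
    exact ih (diff_ico hE (ht q (Finset.mem_insert_self q t')).1
      (ht q (Finset.mem_insert_self q t')).2) (fun p hp => ht p (Finset.mem_insert_of_mem hp))

theorem add_const (hE : NiceSet Δ E) {c : ℝ} (hc : c ∈ Δ) :
    NiceSet Δ ((fun x => x + c) '' E) := by
  obtain ⟨s, hs, rfl⟩ := hE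
  refine ⟨s.image fun p => (p.1 + c, p.2 + c), ?_, ?_⟩
  · intro p hp
    simp only [Finset.mem_image] at hp
    obtain ⟨q, hq, rfl⟩ := hp
    exact ⟨Δ.add_mem (hs _ hq).1 hc, Δ.add_mem (hs _ hq).2 hc⟩
  · rw [Set.image_iUnion₂]
    ext x
    simp only [Set.mem_iUnion, Finset.mem_image, exists_prop]
    constructor
    · rintro ⟨p, hp, hx⟩
      refine ⟨(p.1 + c, p.2 + c), ⟨p, hp, rfl⟩, ?_⟩
      obtain ⟨y, hy, rfl⟩ := hx
      simp only [Set.mem_Ico] at hy ⊢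
      exact ⟨by linarith [hy.1], by linarith [hy.2]⟩
    · rintro ⟨r, ⟨p, hp, rfl⟩, hx⟩
      simp only [Set.mem_Ico] at hx
      exact ⟨p, hp, ⟨x - c, by constructor <;> [skip; ring] <;> constructor <;> linarith [hx.1, hx.2]⟩⟩

theorem measurableSet (hE : NiceSet Δ E) : MeasurableSet E := by
  obtain ⟨s, _, rfl⟩ := hE
  exact MeasurableSet.biUnion s.countable_toSet fun p _ => measurableSet_Ico

end NiceSet

theorem NiceSet.biUnion {Δ : AddSubgroup ℝ} {ι : Type*} (s : Finset ι) (g : ι → Set ℝ)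
    (h : ∀ i ∈ s, NiceSet Δ (g i)) : NiceSet Δ (⋃ i ∈ s, g i) := by
  classical
  induction s using Finset.induction_on with
  | empty => simpa using NiceSet.empty
  | insert q s' hq ih =>
    rw [Finset.set_biUnion_insert]
    exact (h q (Finset.mem_insert_self q s')).union
      (ih fun i hi => h i (Finset.mem_insert_of_mem hi))


/-- A representation of a permutation of `ℝ` as a piecewise translation on pieces with
endpoints and translation constants in `Δ`. -/
structure IETRep (Δ : AddSubgroup ℝ) (f : Equiv.Perm ℝ) where
  s : Finset (ℝ × ℝ × ℝ)
  mem1 : ∀ t ∈ s, t.1 ∈ Δ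
  mem2 : ∀ t ∈ s, t.2.1 ∈ Δ
  memc : ∀ t ∈ s, t.2.2 ∈ Δ
  lt : ∀ t ∈ s, t.1 < t.2.1
  sub : ∀ t ∈ s, Set.Ico t.1 t.2.1 ⊆ Set.Ico 0 1
  cover : Set.Ico (0:ℝ) 1 ⊆ ⋃ t ∈ s, Set.Ico t.1 t.2.1
  disj : (↑s : Set (ℝ×ℝ×ℝ)).PairwiseDisjoint (fun t => Set.Ico t.1 t.2.1)
  trans : ∀ t ∈ s, ∀ x ∈ Set.Ico t.1 t.2.1, f x = x + t.2.2

namespace IETRep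

variable {Δ : AddSubgroup ℝ} {f : Equiv.Perm ℝ}

theorem image_piece (R : IETRep Δ f) {t : ℝ × ℝ × ℝ} (ht : t ∈ R.s) :
    f '' Set.Ico t.1 t.2.1 = Set.Ico (t.1 + t.2.2) (t.2.1 + t.2.2) := by
  ext y
  constructor
  · rintro ⟨x, hx, rfl⟩
    rw [R.trans t ht x hx]
    simp only [Set.mem_Ico] at hx ⊢
    constructor <;> linarith [hx.1, hx.2]
  · intro hy
    simp only [Set.mem_Ico] at hy
    refine ⟨y - t.2.2, ⟨by linarith [hy.1], by linarith [hy.2]⟩, ?_⟩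
    rw [R.trans t ht _ ⟨by linarith [hy.1], by linarith [hy.2]⟩]; ring

theorem image_decomp (R : IETRep Δ f) {E : Set ℝ} (hE : E ⊆ Set.Ico 0 1) :
    f '' E = ⋃ t ∈ R.s, (fun x => x + t.2.2) '' (E ∩ Set.Ico t.1 t.2.1) := by
  ext y
  simp only [Set.mem_iUnion, exists_prop]
  constructor
  · rintro ⟨x, hx, rfl⟩
    obtain ⟨t, ht, hxt⟩ : ∃ t ∈ R.s, x ∈ Set.Ico t.1 t.2.1 := by
      have := R.cover (hE hx); simpa only [Set.mem_iUnion, exists_prop] using this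
    exact ⟨t, ht, x, ⟨hx, hxt⟩, (R.trans t ht x hxt).symm⟩
  · rintro ⟨t, ht, x, ⟨hx, hxt⟩, rfl⟩
    exact ⟨x, hx, R.trans t ht x hxt⟩

theorem image_nice (R : IETRep Δ f) {E : Set ℝ} (hE : E ⊆ Set.Ico 0 1) (hN : NiceSet Δ E) :
    NiceSet Δ (f '' E) := by
  rw [image_decomp R hE]
  exact NiceSet.biUnion _ _ fun t ht =>
    (hN.inter (NiceSet.ico (R.mem1 t ht) (R.mem2 t ht))).add_const (R.memc t ht)

theorem image_measurable (R : IETRep Δ f) {E : Set ℝ} (hE : E ⊆ Set.Ico 0 1) (hm : MeasurableSet E) :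
    MeasurableSet (f '' E) := by
  rw [image_decomp R hE]
  refine MeasurableSet.biUnion R.s.countable_toSet fun t _ => ?_
  have : (fun x => x + t.2.2) '' (E ∩ Set.Ico t.1 t.2.1)
      = (fun y => y + (-t.2.2)) ⁻¹' (E ∩ Set.Ico t.1 t.2.1) := by
    ext y
    simp only [Set.mem_image, Set.mem_preimage]
    constructor
    · rintro ⟨x, hx, rfl⟩; simpa using hx
    · intro h; exact ⟨y + -t.2.2, h, by ring⟩
  rw [this]
  exact (hm.inter measurableSet_Ico).preimage (measurable_add_const _)

theorem decomp_self (R : IETRep Δ f) {E : Set ℝ} (hE : E ⊆ Set.Ico 0 1) :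
    E = ⋃ t ∈ R.s, E ∩ Set.Ico t.1 t.2.1 := by
  ext x
  simp only [Set.mem_iUnion, exists_prop]
  constructor
  · intro hx
    obtain ⟨t, ht, hxt⟩ : ∃ t ∈ R.s, x ∈ Set.Ico t.1 t.2.1 := by
      have := R.cover (hE hx); simpa only [Set.mem_iUnion, exists_prop] using this
    exact ⟨t, ht, hx, hxt⟩
  · rintro ⟨t, _, hx, _⟩; exact hx

theorem image_volume (R : IETRep Δ f) {E : Set ℝ} (hE : E ⊆ Set.Ico 0 1) (hm : MeasurableSet E) :
    volume (f '' E) = volume E := by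
  have him : ∀ t : ℝ × ℝ × ℝ, (fun x => x + t.2.2) '' (E ∩ Set.Ico t.1 t.2.1)
      = (fun y => y + (-t.2.2)) ⁻¹' (E ∩ Set.Ico t.1 t.2.1) := by
    intro t
    ext y
    simp only [Set.mem_image, Set.mem_preimage]
    constructor
    · rintro ⟨x, hx, rfl⟩; simpa using hx
    · intro h; exact ⟨y + -t.2.2, h, by ring⟩
  have himf : ∀ t ∈ R.s, (fun x => x + t.2.2) '' (E ∩ Set.Ico t.1 t.2.1)
      = f '' (E ∩ Set.Ico t.1 t.2.1) := by
    intro t ht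
    ext y
    simp only [Set.mem_image]
    constructor
    · rintro ⟨x, hx, rfl⟩; exact ⟨x, hx, R.trans t ht x hx.2⟩
    · rintro ⟨x, hx, rfl⟩; exact ⟨x, hx, (R.trans t ht x hx.2).symm⟩
  rw [image_decomp R hE]
  rw [measure_biUnion_finset ?disj ?meas]
  case disj =>
    intro t ht u hu htu
    simp only [Function.onFun]
    rw [himf t ht, himf u hu]
    rw [Set.disjoint_image_iff f.injective]
    exact Set.disjoint_of_subset Set.inter_subset_right Set.inter_subset_right
      (R.disj ht hu htu)
  case meas =>
    intro t _
    rw [him t]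
    exact (hm.inter measurableSet_Ico).preimage (measurable_add_const _)
  have : ∀ t ∈ R.s, volume ((fun x => x + t.2.2) '' (E ∩ Set.Ico t.1 t.2.1))
      = volume (E ∩ Set.Ico t.1 t.2.1) := by
    intro t _
    rw [him t]
    exact measure_preimage_add_right volume _ _
  rw [Finset.sum_congr rfl this]
  rw [← measure_biUnion_finset ?disj2 ?meas2]
  · exact congrArg volume (decomp_self R hE).symm
  case disj2 =>
    intro t ht u hu htu
    exact Set.disjoint_of_subset Set.inter_subset_right Set.inter_subset_right
      (R.disj ht hu htu)
  case meas2 =>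
    intro t _
    exact hm.inter measurableSet_Ico

end IETRep


theorem perm_maps_Ico {f : Equiv.Perm ℝ} (hout : ∀ x : ℝ, x ∉ Set.Ico (0:ℝ) 1 → f x = x)
    {x : ℝ} (hx : x ∈ Set.Ico (0:ℝ) 1) : f x ∈ Set.Ico (0:ℝ) 1 := by
  by_contra h
  have h2 := hout _ h
  have := f.injective h2
  rw [this] at h
  exact h hx

theorem perm_symm_out {f : Equiv.Perm ℝ} (hout : ∀ x : ℝ, x ∉ Set.Ico (0:ℝ) 1 → f x = x)
    {x : ℝ} (hx : x ∉ Set.Ico (0:ℝ) 1) : f.symm x = x := by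
  conv_lhs => rw [← hout x hx]
  exact f.symm_apply_apply x

theorem perm_symm_maps_Ico {f : Equiv.Perm ℝ} (hout : ∀ x : ℝ, x ∉ Set.Ico (0:ℝ) 1 → f x = x)
    {x : ℝ} (hx : x ∈ Set.Ico (0:ℝ) 1) : f.symm x ∈ Set.Ico (0:ℝ) 1 := by
  by_contra h
  have h2 : f (f.symm x) = f.symm x := hout _ h
  rw [f.apply_symm_apply] at h2
  rw [← h2] at h
  exact h hx

namespace IETRep

variable {Δ : AddSubgroup ℝ} {f : Equiv.Perm ℝ}

theorem posPart_eq (R : IETRep Δ f) (hout : ∀ x : ℝ, x ∉ Set.Ico (0:ℝ) 1 → f x = x) :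
    {x : ℝ | x < f x} = ⋃ t ∈ R.s.filter (fun t => 0 < t.2.2), Set.Ico t.1 t.2.1 := by
  ext x
  simp only [Set.mem_setOf_eq, Set.mem_iUnion, Finset.mem_filter, exists_prop]
  constructor
  · intro hx
    have hx01 : x ∈ Set.Ico (0:ℝ) 1 := by
      by_contra h
      rw [hout x h] at hx
      exact lt_irrefl x hx
    obtain ⟨t, ht, hxt⟩ : ∃ t ∈ R.s, x ∈ Set.Ico t.1 t.2.1 := by
      have := R.cover hx01; simpa only [Set.mem_iUnion, exists_prop] using this
    refine ⟨t, ⟨ht, ?_⟩, hxt⟩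
    have := R.trans t ht x hxt
    linarith [this ▸ hx]
  · rintro ⟨t, ⟨ht, hc⟩, hxt⟩
    have := R.trans t ht x hxt
    rw [this]; linarith

theorem posPart_nice (R : IETRep Δ f) (hout : ∀ x : ℝ, x ∉ Set.Ico (0:ℝ) 1 → f x = x) :
    NiceSet Δ {x : ℝ | x < f x} := by
  rw [R.posPart_eq hout]
  exact NiceSet.biUnion _ _ fun t ht =>
    NiceSet.ico (R.mem1 t (Finset.mem_filter.1 ht).1) (R.mem2 t (Finset.mem_filter.1 ht).1)

theorem posPart_sub (R : IETRep Δ f) (hout : ∀ x : ℝ, x ∉ Set.Ico (0:ℝ) 1 → f x = x) :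
    {x : ℝ | x < f x} ⊆ Set.Ico 0 1 := by
  rw [R.posPart_eq hout]
  intro x hx
  simp only [Set.mem_iUnion, exists_prop] at hx
  obtain ⟨t, ht, hxt⟩ := hx
  exact R.sub t (Finset.mem_filter.1 ht).1 hxt

theorem posPart_moves (R : IETRep Δ f) (hout : ∀ x : ℝ, x ∉ Set.Ico (0:ℝ) 1 → f x = x)
    {x : ℝ} (hx : x < f x) :
    ∃ t ∈ R.s.filter (fun t => 0 < t.2.2), f x - x = t.2.2 := by
  have hx' : x ∈ ⋃ t ∈ R.s.filter (fun t => 0 < t.2.2), Set.Ico t.1 t.2.1 := by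
    rw [← R.posPart_eq hout]; exact hx
  simp only [Set.mem_iUnion, exists_prop] at hx'
  obtain ⟨t, ht, hxt⟩ := hx'
  have := R.trans t (Finset.mem_filter.1 ht).1 x hxt
  exact ⟨t, ht, by linarith⟩

/-- The key construction: a nice set `A` inside `{x | x < f x}`, disjoint from its image,
of measure at least half of `{x | x < f x}`. -/
theorem exists_half (R : IETRep Δ f) (hout : ∀ x : ℝ, x ∉ Set.Ico (0:ℝ) 1 → f x = x) :
    ∃ A : Set ℝ, NiceSet Δ A ∧ A ⊆ {x : ℝ | x < f x} ∧ (∀ y ∈ A, f y ∉ A) ∧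
      MeasureTheory.volume {x : ℝ | x < f x} ≤ 2 * MeasureTheory.volume A := by
  classical
  set P := {x : ℝ | x < f x} with hPdef
  have hPnice : NiceSet Δ P := R.posPart_nice hout
  have hPsub : P ⊆ Set.Ico 0 1 := R.posPart_sub hout
  have hPmeas : MeasurableSet P := hPnice.measurableSet
  by_cases hne : (R.s.filter (fun t => 0 < t.2.2)).Nonempty
  swap
  · refine ⟨∅, NiceSet.empty, by simp, by simp, ?_⟩
    have : P = ∅ := by
      rw [hPdef, R.posPart_eq hout]
      rw [Finset.not_nonempty_iff_eq_empty] at hne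
      rw [hne]; simp
    rw [this]; simp
  obtain ⟨t0, ht0, hminle⟩ := Finset.exists_min_image (R.s.filter (fun t => 0 < t.2.2))
    (fun t => t.2.2) hne
  set δ : ℝ := t0.2.2 with hδdef
  have hδpos : 0 < δ := (Finset.mem_filter.1 ht0).2
  have hmoves : ∀ x ∈ P, δ ≤ f x - x := by
    intro x hx
    obtain ⟨t, ht, heq⟩ := R.posPart_moves hout hx
    rw [heq]
    exact hminle t ht
  -- the sequence of depth sets
  set D : ℕ → Set ℝ := fun n => Nat.rec (P \ f '' P) (fun _ Dn => (f '' Dn) ∩ P) n with hDdef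
  have hD0 : D 0 = P \ f '' P := rfl
  have hDsucc : ∀ n, D (n + 1) = (f '' D n) ∩ P := fun n => rfl
  have hDP : ∀ n, D n ⊆ P := by
    intro n
    cases n with
    | zero => rw [hD0]; exact Set.diff_subset
    | succ n => rw [hDsucc]; exact Set.inter_subset_right
  have hDnice : ∀ n, NiceSet Δ (D n) := by
    intro n
    induction n with
    | zero => exact hPnice.diff (R.image_nice hPsub hPnice)
    | succ n ih =>
      rw [hDsucc]
      exact (R.image_nice ((hDP n).trans hPsub) ih).inter hPnice
  have hDmeas : ∀ n, MeasurableSet (D n) := fun n => (hDnice n).measurableSet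
  have hDdisj : ∀ n k : ℕ, ∀ x, x ∈ D n → x ∈ D (n + k + 1) → False := by
    intro n
    induction n with
    | zero =>
      intro k x hx0 hx1
      rw [hD0] at hx0
      have e : 0 + k + 1 = k + 1 := by omega
      rw [e, hDsucc k] at hx1
      exact hx0.2 (Set.image_mono (hDP k) hx1.1)
    | succ n ih =>
      intro k x hxn hxk
      rw [hDsucc] at hxn
      have e : n + 1 + k + 1 = (n + k + 1) + 1 := by omega
      rw [e, hDsucc (n+k+1)] at hxk
      have hxk' : x ∈ f '' D (n + k + 1) ∩ P := hxk
      obtain ⟨y, hy, hyx⟩ := hxn.1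
      obtain ⟨y', hy', hyx'⟩ := hxk'.1
      have : y = y' := f.injective (hyx.trans hyx'.symm)
      exact ih k y hy (this ▸ hy')
  have hDpair : ∀ n m : ℕ, n ≠ m → Disjoint (D n) (D m) := by
    intro n m hnm
    rw [Set.disjoint_left]
    intro x hxn hxm
    rcases Nat.lt_or_ge n m with h | h
    · obtain ⟨k, rfl⟩ : ∃ k, m = n + k + 1 := ⟨m - n - 1, by omega⟩
      exact hDdisj n k x hxn hxm
    · obtain ⟨k, rfl⟩ : ∃ k, n = m + k + 1 := ⟨n - m - 1, by omega⟩
      exact hDdisj m k x hxm hxn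
  have hDvol : ∀ n, MeasureTheory.volume (D (n+1)) ≤ MeasureTheory.volume (D n) := by
    intro n
    calc MeasureTheory.volume (D (n+1)) ≤ MeasureTheory.volume (f '' D n) := by
          rw [hDsucc]; exact MeasureTheory.measure_mono Set.inter_subset_left
    _ = MeasureTheory.volume (D n) := R.image_volume ((hDP n).trans hPsub) (hDmeas n)
  have hDanti : ∀ n m : ℕ, n ≤ m → MeasureTheory.volume (D m) ≤ MeasureTheory.volume (D n) := by
    intro n m h
    induction m with
    | zero => rw [Nat.le_zero.1 h]
    | succ m ih =>
      rcases Nat.lt_or_ge n (m+1) with h' | h'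
      · exact (hDvol m).trans (ih (by omega))
      · rw [Nat.le_antisymm h h']
  -- every point of P is in some D k
  have hdepth : ∀ n : ℕ, ∀ x ∈ P, x < n * δ → ∃ k < n, x ∈ D k := by
    intro n
    induction n with
    | zero =>
      intro x hx hlt
      exfalso
      have := (hPsub hx).1
      simp at hlt
      linarith
    | succ n ih =>
      intro x hx hlt
      by_cases hxim : x ∈ f '' P
      · obtain ⟨y, hy, rfl⟩ := hxim
        have h1 : δ ≤ f y - y := hmoves y hy
        have h2 : y < n * δ := by
          push_cast at hlt ⊢
          linarith
        obtain ⟨k, hk, hyk⟩ := ih y hy h2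
        refine ⟨k + 1, by omega, ?_⟩
        rw [hDsucc]
        exact ⟨⟨y, hyk, rfl⟩, hx⟩
      · exact ⟨0, by omega, ⟨hx, hxim⟩⟩
  obtain ⟨M, hM⟩ : ∃ M : ℕ, 1 ≤ (2 * M : ℝ) * δ := by
    refine ⟨⌈1/δ⌉₊ + 1, ?_⟩
    have h1 : (1:ℝ)/δ ≤ ⌈(1:ℝ)/δ⌉₊ := Nat.le_ceil _
    have h2 : (⌈(1:ℝ)/δ⌉₊ : ℝ) ≤ 2 * (⌈(1:ℝ)/δ⌉₊ + 1 : ℕ) := by push_cast; linarith [Nat.cast_nonneg (α := ℝ) ⌈(1:ℝ)/δ⌉₊]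
    calc (1:ℝ) = (1/δ) * δ := by field_simp
    _ ≤ (⌈(1:ℝ)/δ⌉₊ : ℝ) * δ := by apply mul_le_mul_of_nonneg_right h1 hδpos.le
    _ ≤ (2 * (⌈(1:ℝ)/δ⌉₊ + 1 : ℕ) : ℝ) * δ := by apply mul_le_mul_of_nonneg_right h2 hδpos.le
  set N := 2 * M with hNdef
  have hPcov : P = ⋃ k ∈ Finset.range N, D k := by
    apply Set.Subset.antisymm
    · intro x hx
      have hx1 : x < (N : ℝ) * δ := by
        have hxlt := (hPsub hx).2
        have hcast : ((N:ℕ):ℝ) = 2*(M:ℝ) := by rw [hNdef]; push_cast; ring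
        rw [hcast]
        linarith
      obtain ⟨k, hk, hxk⟩ := hdepth N x hx (by exact_mod_cast hx1)
      simp only [Set.mem_iUnion, exists_prop]
      exact ⟨k, Finset.mem_range.2 hk, hxk⟩
    · intro x hx
      simp only [Set.mem_iUnion, exists_prop] at hx
      obtain ⟨k, _, hxk⟩ := hx
      exact hDP k hxk
  set A : Set ℝ := ⋃ k ∈ (Finset.range N).filter (fun k => Even k), D k with hAdef
  have hAnice : NiceSet Δ A := NiceSet.biUnion _ _ fun k _ => hDnice k
  have hAP : A ⊆ P := by
    intro x hx
    simp only [hAdef, Set.mem_iUnion, exists_prop] at hx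
    obtain ⟨k, _, hxk⟩ := hx
    exact hDP k hxk
  refine ⟨A, hAnice, hAP, ?_, ?_⟩
  · -- A ∩ f(A) = ∅
    intro y hy hfy
    simp only [hAdef, Set.mem_iUnion, exists_prop, Finset.mem_filter, Finset.mem_range] at hy hfy
    obtain ⟨k, ⟨hkN, hkev⟩, hyk⟩ := hy
    obtain ⟨j, ⟨hjN, hjev⟩, hfyj⟩ := hfy
    have hfyP : f y ∈ P := hAP (by
      simp only [hAdef, Set.mem_iUnion, exists_prop, Finset.mem_filter, Finset.mem_range]
      exact ⟨j, ⟨hjN, hjev⟩, hfyj⟩)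
    have hfyk : f y ∈ D (k+1) := by
      rw [hDsucc]
      exact ⟨⟨y, hyk, rfl⟩, hfyP⟩
    have : j = k + 1 := by
      by_contra h
      exact Set.disjoint_left.1 (hDpair j (k+1) h) hfyj hfyk
    rw [this] at hjev
    exact (Nat.even_add_one.1 hjev) hkev
  · -- volume bound
    have hPsum : MeasureTheory.volume P = ∑ k ∈ Finset.range N, MeasureTheory.volume (D k) := by
      rw [hPcov]
      exact MeasureTheory.measure_biUnion_finset
        (fun n hn m hm hnm => hDpair n m hnm) (fun k _ => hDmeas k)
    have hAsum : MeasureTheory.volume A = ∑ k ∈ (Finset.range N).filter (fun k => Even k),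
        MeasureTheory.volume (D k) := by
      rw [hAdef]
      exact MeasureTheory.measure_biUnion_finset
        (fun n hn m hm hnm => hDpair n m hnm) (fun k _ => hDmeas k)
    rw [hPsum, hAsum]
    -- ∑_{k<2M} ≤ 2 ∑_{k<2M even}
    have key : ∀ m : ℕ, ∑ k ∈ Finset.range (2*m), MeasureTheory.volume (D k)
        ≤ 2 * ∑ k ∈ (Finset.range (2*m)).filter (fun k => Even k), MeasureTheory.volume (D k) := by
      intro m
      induction m with
      | zero => simp
      | succ m ih =>
        have h2m : 2 * (m+1) = 2*m + 1 + 1 := by omega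
        rw [h2m, Finset.sum_range_succ, Finset.sum_range_succ]
        have hfil : (Finset.range (2*m+1+1)).filter (fun k => Even k)
            = insert (2*m) ((Finset.range (2*m)).filter (fun k => Even k)) := by
          ext k
          simp only [Finset.mem_filter, Finset.mem_range, Finset.mem_insert]
          constructor
          · rintro ⟨hk, hev⟩
            rcases Nat.lt_or_ge k (2*m) with h | h
            · exact Or.inr ⟨h, hev⟩
            · left
              have hk2 : k = 2*m ∨ k = 2*m+1 := by omega
              rcases hk2 with rfl | rfl
              · rfl
              · exact absurd (even_two_mul m) (Nat.even_add_one.1 hev)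
          · rintro (rfl | ⟨hk, hev⟩)
            · exact ⟨by omega, Nat.even_mul.2 (Or.inl (by norm_num))⟩
            · exact ⟨by omega, hev⟩
        rw [hfil, Finset.sum_insert (by simp)]
        have hmono : MeasureTheory.volume (D (2*m+1)) ≤ MeasureTheory.volume (D (2*m)) :=
          hDvol (2*m)
        calc ∑ k ∈ Finset.range (2*m), MeasureTheory.volume (D k)
            + MeasureTheory.volume (D (2*m)) + MeasureTheory.volume (D (2*m+1))
            ≤ 2 * ∑ k ∈ (Finset.range (2*m)).filter (fun k => Even k), MeasureTheory.volume (D k)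
              + MeasureTheory.volume (D (2*m)) + MeasureTheory.volume (D (2*m)) := by
              gcongr
        _ = 2 * (MeasureTheory.volume (D (2*m))
              + ∑ k ∈ (Finset.range (2*m)).filter (fun k => Even k), MeasureTheory.volume (D k)) := by
              ring
    exact key M

end IETRep



namespace IETRep
variable {Δ : AddSubgroup ℝ} {f : Equiv.Perm ℝ}

/-- The inverse of a piecewise translation, with the translated pieces. -/
noncomputable def symm (R : IETRep Δ f) (hout : ∀ x : ℝ, x ∉ Set.Ico (0:ℝ) 1 → f x = x) :
    IETRep Δ f.symm where
  s := R.s.image fun t => (t.1 + t.2.2, t.2.1 + t.2.2, -t.2.2)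
  mem1 := by
    intro t ht
    simp only [Finset.mem_image] at ht
    obtain ⟨u, hu, rfl⟩ := ht
    exact Δ.add_mem (R.mem1 u hu) (R.memc u hu)
  mem2 := by
    intro t ht
    simp only [Finset.mem_image] at ht
    obtain ⟨u, hu, rfl⟩ := ht
    exact Δ.add_mem (R.mem2 u hu) (R.memc u hu)
  memc := by
    intro t ht
    simp only [Finset.mem_image] at ht
    obtain ⟨u, hu, rfl⟩ := ht
    exact Δ.neg_mem (R.memc u hu)
  lt := by
    intro t ht
    simp only [Finset.mem_image] at ht
    obtain ⟨u, hu, rfl⟩ := ht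
    have := R.lt u hu
    simpa using this
  sub := by
    intro t ht
    simp only [Finset.mem_image] at ht
    obtain ⟨u, hu, rfl⟩ := ht
    intro x hx
    simp only at hx
    have : x ∈ f '' Set.Ico u.1 u.2.1 := by rw [R.image_piece hu]; exact hx
    obtain ⟨y, hy, rfl⟩ := this
    exact perm_maps_Ico hout (R.sub u hu hy)
  cover := by
    intro y hy
    have hsy : f.symm y ∈ Set.Ico (0:ℝ) 1 := perm_symm_maps_Ico hout hy
    have := R.cover hsy
    simp only [Set.mem_iUnion, exists_prop] at this ⊢
    obtain ⟨u, hu, hxu⟩ := this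
    refine ⟨(u.1 + u.2.2, u.2.1 + u.2.2, -u.2.2), Finset.mem_image_of_mem _ hu, ?_⟩
    have : y ∈ f '' Set.Ico u.1 u.2.1 := ⟨f.symm y, hxu, f.apply_symm_apply y⟩
    rw [R.image_piece hu] at this
    exact this
  disj := by
    intro t ht u hu htu
    simp only [Finset.coe_image, Set.mem_image, Finset.mem_coe] at ht hu
    obtain ⟨a, ha, rfl⟩ := ht
    obtain ⟨b, hb, rfl⟩ := hu
    have hab : a ≠ b := fun h => htu (by rw [h])
    have := R.disj ha hb hab
    simp only [Function.onFun] at this ⊢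
    have h1 : Set.Ico ((a.1 + a.2.2, a.2.1 + a.2.2, -a.2.2) : ℝ × ℝ × ℝ).1
        (a.1 + a.2.2, a.2.1 + a.2.2, -a.2.2).2.1 = f '' Set.Ico a.1 a.2.1 :=
      (R.image_piece ha).symm
    have h2 : Set.Ico ((b.1 + b.2.2, b.2.1 + b.2.2, -b.2.2) : ℝ × ℝ × ℝ).1
        (b.1 + b.2.2, b.2.1 + b.2.2, -b.2.2).2.1 = f '' Set.Ico b.1 b.2.1 :=
      (R.image_piece hb).symm
    rw [h1, h2, Set.disjoint_image_iff f.injective]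
    exact this
  trans := by
    intro t ht x hx
    simp only [Finset.mem_image] at ht
    obtain ⟨u, hu, rfl⟩ := ht
    simp only [Set.mem_Ico] at hx
    have hy : x - u.2.2 ∈ Set.Ico u.1 u.2.1 := ⟨by linarith [hx.1], by linarith [hx.2]⟩
    have h1 : f (x - u.2.2) = x := by rw [R.trans u hu _ hy]; ring
    have h2 : f.symm x = x - u.2.2 := by
      conv_lhs => rw [← h1]
      rw [f.symm_apply_apply]
    rw [h2]; ring



theorem image_piece_sub (R : IETRep Δ f) (hout : ∀ x : ℝ, x ∉ Set.Ico (0:ℝ) 1 → f x = x)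
    {t : ℝ × ℝ × ℝ} (ht : t ∈ R.s) :
    Set.Ico (t.1 + t.2.2) (t.2.1 + t.2.2) ⊆ Set.Ico 0 1 := by
  rw [← R.image_piece ht]
  rintro y ⟨x, hx, rfl⟩
  exact perm_maps_Ico hout (R.sub t ht hx)

theorem image_disj (R : IETRep Δ f) {t u : ℝ × ℝ × ℝ} (ht : t ∈ R.s) (hu : u ∈ R.s)
    (htu : t ≠ u) :
    Disjoint (Set.Ico (t.1 + t.2.2) (t.2.1 + t.2.2)) (Set.Ico (u.1 + u.2.2) (u.2.1 + u.2.2)) := by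
  rw [← R.image_piece ht, ← R.image_piece hu, Set.disjoint_image_iff f.injective]
  exact R.disj ht hu htu

/-- Tiling: the left endpoint of each image interval equals the sum of lengths of the image
intervals to its left. -/
theorem left_endpoint_eq_sum (R : IETRep Δ f) (hout : ∀ x : ℝ, x ∉ Set.Ico (0:ℝ) 1 → f x = x)
    {t : ℝ × ℝ × ℝ} (ht : t ∈ R.s) :
    t.1 + t.2.2 = ∑ u ∈ R.s.filter (fun u => u.1 + u.2.2 < t.1 + t.2.2), (u.2.1 - u.1) := by
  classical
  set L := t.1 + t.2.2 with hL
  have hL01 : L ∈ Set.Ico (0:ℝ) 1 :=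
    R.image_piece_sub hout ht ⟨le_refl L, by have := R.lt t ht; linarith⟩
  have hcov : Set.Ico (0:ℝ) L
      = ⋃ u ∈ R.s.filter (fun u => u.1 + u.2.2 < L), Set.Ico (u.1 + u.2.2) (u.2.1 + u.2.2) := by
    apply Set.Subset.antisymm
    · intro y hy
      have hy01 : y ∈ Set.Ico (0:ℝ) 1 := ⟨hy.1, lt_trans hy.2 hL01.2⟩
      have hx01 : f.symm y ∈ Set.Ico (0:ℝ) 1 := perm_symm_maps_Ico hout hy01
      obtain ⟨u, hu, hxu⟩ : ∃ u ∈ R.s, f.symm y ∈ Set.Ico u.1 u.2.1 := by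
        have := R.cover hx01; simpa only [Set.mem_iUnion, exists_prop] using this
      have hyim : y ∈ Set.Ico (u.1 + u.2.2) (u.2.1 + u.2.2) := by
        rw [← R.image_piece hu]
        exact ⟨f.symm y, hxu, f.apply_symm_apply y⟩
      simp only [Set.mem_iUnion, exists_prop, Finset.mem_filter]
      exact ⟨u, ⟨hu, lt_of_le_of_lt hyim.1 hy.2⟩, hyim⟩
    · intro y hy
      simp only [Set.mem_iUnion, exists_prop, Finset.mem_filter] at hy
      obtain ⟨u, ⟨hu, hub⟩, hyu⟩ := hy
      have h0 : (0:ℝ) ≤ u.1 + u.2.2 := (R.image_piece_sub hout hu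
        ⟨le_refl _, by have := R.lt u hu; linarith⟩).1
      refine ⟨le_trans h0 hyu.1, ?_⟩
      have hut : u ≠ t := by
        intro h; rw [h] at hub; exact lt_irrefl _ hub
      have hRu : u.2.1 + u.2.2 ≤ L := by
        by_contra hcon
        push_neg at hcon
        have h1 : L ∈ Set.Ico (u.1 + u.2.2) (u.2.1 + u.2.2) := ⟨hub.le, hcon⟩
        have h2 : L ∈ Set.Ico (t.1 + t.2.2) (t.2.1 + t.2.2) :=
          ⟨le_refl _, by have := R.lt t ht; linarith⟩
        exact Set.disjoint_left.1 (R.image_disj hu ht hut) h1 h2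
      exact lt_of_lt_of_le hyu.2 hRu
  have hvol : volume (Set.Ico (0:ℝ) L)
      = ∑ u ∈ R.s.filter (fun u => u.1 + u.2.2 < L), volume (Set.Ico (u.1 + u.2.2) (u.2.1 + u.2.2)) := by
    rw [hcov]
    refine measure_biUnion_finset ?_ (fun u _ => measurableSet_Ico)
    intro u hu u' hu' huu'
    simp only [Finset.coe_filter, Set.mem_setOf_eq] at hu hu'
    exact R.image_disj hu.1 hu'.1 huu'
  rw [Real.volume_Ico] at hvol
  have hvol2 : ∀ u ∈ R.s.filter (fun u => u.1 + u.2.2 < L),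
      volume (Set.Ico (u.1 + u.2.2) (u.2.1 + u.2.2)) = ENNReal.ofReal (u.2.1 - u.1) := by
    intro u _
    rw [Real.volume_Ico]
    congr 1
    ring
  rw [Finset.sum_congr rfl hvol2, ← ENNReal.ofReal_sum_of_nonneg] at hvol
  · have h1 : L - 0 = L := by ring
    rw [h1] at hvol
    have h0L : 0 ≤ L := hL01.1
    have h0S : 0 ≤ ∑ u ∈ R.s.filter (fun u => u.1 + u.2.2 < L), (u.2.1 - u.1) := by
      apply Finset.sum_nonneg
      intro u hu
      have := R.lt u (Finset.mem_filter.1 hu).1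
      linarith
    exact (ENNReal.ofReal_eq_ofReal_iff h0L h0S).1 hvol
  · intro u hu
    have := R.lt u (Finset.mem_filter.1 hu).1
    linarith



end IETRep

/-- Locate a point in a strictly monotone subdivision. -/
theorem find_gap {n : ℕ} (a : Fin (n + 2) → ℝ) (hmono : StrictMono a) {x : ℝ}
    (hx : x ∈ Set.Ico (a 0) (a (Fin.last (n + 1)))) :
    ∃ i : Fin (n + 1), x ∈ Set.Ico (a i.castSucc) (a i.succ) := by
  classical
  set s : Finset (Fin (n + 2)) := Finset.univ.filter (fun i => a i ≤ x) with hs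
  have hs0 : (0 : Fin (n+2)) ∈ s := by
    simp only [hs, Finset.mem_filter, Finset.mem_univ, true_and]
    exact hx.1
  have hsne : s.Nonempty := ⟨0, hs0⟩
  set i₀ := s.max' hsne with hi₀
  have hi₀le : a i₀ ≤ x := by
    have := s.max'_mem hsne
    simp only [hs, Finset.mem_filter] at this
    exact this.2
  have hi₀lt : i₀ ≠ Fin.last (n+1) := by
    intro h
    rw [h] at hi₀le
    exact absurd hx.2 (not_lt.2 hi₀le)
  have hval : i₀.val < n + 1 := by
    rcases lt_or_eq_of_le (Nat.lt_succ_iff.1 i₀.isLt) with h | h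
    · exact h
    · exact absurd (Fin.ext h : i₀ = Fin.last (n+1)) hi₀lt
  refine ⟨⟨i₀.val, hval⟩, ?_, ?_⟩
  · have : (⟨i₀.val, hval⟩ : Fin (n+1)).castSucc = i₀ := by
      ext; simp
    rw [this]; exact hi₀le
  · by_contra h
    push_neg at h
    have hmem : (⟨i₀.val, hval⟩ : Fin (n+1)).succ ∈ s := by
      simp only [hs, Finset.mem_filter, Finset.mem_univ, true_and]
      exact h
    have hle := s.le_max' _ hmem
    rw [← hi₀] at hle
    have : i₀.val + 1 ≤ i₀.val := by
      simpa [Fin.le_def] using hle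
    omega

/-- Enumerate a finite set of reals containing 0 and 1 and contained in `[0,1]` as a strictly
monotone subdivision. -/
theorem enumerate_finset (T : Finset ℝ) (h0 : (0:ℝ) ∈ T) (h1 : (1:ℝ) ∈ T)
    (hsub : ∀ t ∈ T, t ∈ Set.Icc (0:ℝ) 1) :
    ∃ (m : ℕ) (a : Fin (m + 2) → ℝ),
      a 0 = 0 ∧ a (Fin.last (m + 1)) = 1 ∧ StrictMono a ∧ (∀ i, a i ∈ T) ∧
      (∀ i : Fin (m + 1), ∀ t ∈ T, t ∉ Set.Ioo (a i.castSucc) (a i.succ)) := by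
  have hcard : 2 ≤ T.card := by
    have : ({0, 1} : Finset ℝ) ⊆ T := by
      intro x hx
      simp only [Finset.mem_insert, Finset.mem_singleton] at hx
      rcases hx with rfl | rfl
      exacts [h0, h1]
    calc 2 = ({0, 1} : Finset ℝ).card := by simp
    _ ≤ T.card := Finset.card_le_card this
  obtain ⟨m, hm⟩ : ∃ m, T.card = m + 2 := ⟨T.card - 2, by omega⟩
  set e := T.orderIsoOfFin hm with he
  set a : Fin (m + 2) → ℝ := fun i => (e i : ℝ) with ha
  have hmono : StrictMono a := fun i j hij => by
    have := e.strictMono hij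
    exact_mod_cast this
  have hmem : ∀ i, a i ∈ T := fun i => (e i).2
  have hsurj : ∀ t ∈ T, ∃ i, a i = t := by
    intro t ht
    refine ⟨e.symm ⟨t, ht⟩, ?_⟩
    show ((e (e.symm ⟨t, ht⟩) : { x // x ∈ T }) : ℝ) = t
    rw [e.apply_symm_apply]
  have ha0 : a 0 = 0 := by
    obtain ⟨j, hj⟩ := hsurj 0 h0
    have h1' : 0 ≤ a 0 := (hsub _ (hmem 0)).1
    have h2' : a 0 ≤ a j := hmono.monotone (Fin.zero_le j)
    rw [hj] at h2'
    linarith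
  have halast : a (Fin.last (m+1)) = 1 := by
    obtain ⟨j, hj⟩ := hsurj 1 h1
    have h1' : a (Fin.last (m+1)) ≤ 1 := (hsub _ (hmem _)).2
    have h2' : a j ≤ a (Fin.last (m+1)) := hmono.monotone (Fin.le_last j)
    rw [hj] at h2'
    linarith
  refine ⟨m, a, ha0, halast, hmono, hmem, ?_⟩
  intro i t ht hmem'
  obtain ⟨j, rfl⟩ := hsurj t ht
  rcases hmem' with ⟨hlt1, hlt2⟩
  have hj1 : i.castSucc < j := hmono.lt_iff_lt.1 hlt1
  have hj2 : j < i.succ := hmono.lt_iff_lt.1 hlt2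
  rw [Fin.lt_def] at hj1 hj2
  simp only [Fin.coe_castSucc, Fin.val_succ] at hj1 hj2
  omega

/-- If `u, v` are consecutive in `T` and a nice set has all endpoints in `T`, then the gap
`[u,v)` is inside the set or disjoint from it. -/
theorem gap_dichotomy {E : Set ℝ} {s : Finset (ℝ × ℝ)} (hE : E = ⋃ p ∈ s, Set.Ico p.1 p.2)
    {T : Set ℝ} (hT : ∀ p ∈ s, p.1 ∈ T ∧ p.2 ∈ T) {u v : ℝ}
    (hno : ∀ t ∈ T, t ∉ Set.Ioo u v) :
    Set.Ico u v ⊆ E ∨ Set.Ico u v ∩ E = ∅ := by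
  by_cases h : Set.Ico u v ∩ E = ∅
  · exact Or.inr h
  · left
    obtain ⟨x, hxuv, hxE⟩ := Set.nonempty_iff_ne_empty.2 h
    rw [hE] at hxE
    simp only [Set.mem_iUnion, exists_prop] at hxE
    obtain ⟨p, hp, hxp⟩ := hxE
    have hsub : Set.Ico u v ⊆ Set.Ico p.1 p.2 := by
      have hp1 : p.1 ≤ u := by
        rcases lt_or_ge u p.1 with h' | h'
        · exfalso
          exact hno p.1 (hT p hp).1 ⟨h', lt_of_le_of_lt hxp.1 hxuv.2⟩
        · exact h'
      have hp2 : v ≤ p.2 := by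
        rcases lt_or_ge p.2 v with h' | h'
        · exfalso
          exact hno p.2 (hT p hp).2 ⟨lt_of_le_of_lt hxuv.1 hxp.2, h'⟩
        · exact h'
      intro y hy
      exact ⟨le_trans hp1 hy.1, lt_of_lt_of_le hy.2 hp2⟩
    rw [hE]
    intro y hy
    simp only [Set.mem_iUnion, exists_prop]
    exact ⟨p, hp, hsub hy⟩


theorem ico_bounds {p q : ℝ} (hpq : p < q) (hsub : Set.Ico p q ⊆ Set.Ico 0 1) :
    0 ≤ p ∧ q ≤ 1 := by
  have hp := hsub ⟨le_refl p, hpq⟩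
  refine ⟨hp.1, ?_⟩
  by_contra h
  push_neg at h
  have hmem : max p 1 ∈ Set.Ico p q := ⟨le_max_left _ _, max_lt hpq h⟩
  have h2 := hsub hmem
  have h1 : (1:ℝ) ≤ max p 1 := le_max_right _ _
  linarith [h2.2]

/-- Clip a nice representation to `[0,1]`, preserving the set and remembering original pieces. -/
theorem clip_rep {Δ : AddSubgroup ℝ} (s : Finset (ℝ × ℝ))
    (hmem : ∀ p ∈ s, p.1 ∈ Δ ∧ p.2 ∈ Δ) {E : Set ℝ} (hE : E = ⋃ p ∈ s, Set.Ico p.1 p.2)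
    (hsub : E ⊆ Set.Ico 0 1) :
    ∃ s' : Finset (ℝ × ℝ),
      (∀ p ∈ s', (p.1 ∈ Δ ∧ p.2 ∈ Δ) ∧ p.1 ∈ Set.Icc (0:ℝ) 1 ∧ p.2 ∈ Set.Icc (0:ℝ) 1) ∧
      E = (⋃ p ∈ s', Set.Ico p.1 p.2) ∧
      ∀ p ∈ s', (Set.Ico p.1 p.2).Nonempty → p ∈ s := by
  classical
  have hpc : ∀ q ∈ s, Set.Ico q.1 q.2 ⊆ Set.Ico (0:ℝ) 1 := by
    intro q hq
    intro x hx
    exact hsub (hE ▸ Set.mem_biUnion hq hx)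
  refine ⟨s.image (fun p => if p.2 ≤ p.1 then ((0:ℝ), (0:ℝ)) else p), ?_, ?_, ?_⟩
  · intro p hp
    simp only [Finset.mem_image] at hp
    obtain ⟨q, hq, rfl⟩ := hp
    by_cases h : q.2 ≤ q.1
    · simp only [h, if_true]
      exact ⟨⟨Δ.zero_mem, Δ.zero_mem⟩, by norm_num, by norm_num⟩
    · simp only [h, if_false]
      push_neg at h
      obtain ⟨hb1, hb2⟩ := ico_bounds h (hpc q hq)
      exact ⟨hmem q hq, ⟨hb1, by linarith⟩, ⟨by linarith, hb2⟩⟩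
  · rw [hE]
    ext x
    simp only [Set.mem_iUnion, Finset.mem_image, exists_prop]
    constructor
    · rintro ⟨q, hq, hx⟩
      have h : ¬ q.2 ≤ q.1 := by
        push_neg
        exact lt_of_le_of_lt hx.1 hx.2
      exact ⟨q, ⟨q, hq, by simp [h]⟩, hx⟩
    · rintro ⟨p, ⟨q, hq, rfl⟩, hx⟩
      by_cases h : q.2 ≤ q.1
      · simp only [h, if_true] at hx
        simp only [Set.mem_Ico] at hx
        linarith [hx.1, hx.2]
      · simp only [h, if_false] at hx
        exact ⟨q, hq, hx⟩
  · intro p hp hne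
    simp only [Finset.mem_image] at hp
    obtain ⟨q, hq, rfl⟩ := hp
    by_cases h : q.2 ≤ q.1
    · exfalso
      simp only [h, if_true] at hne
      obtain ⟨x, hx⟩ := hne
      simp only [Set.mem_Ico] at hx
      linarith [hx.1, hx.2]
    · simp only [h, if_false]
      exact hq


theorem exists_rep (f : Equiv.Perm ℝ) (Δ : AddSubgroup ℝ) (h1Δ : (1:ℝ) ∈ Δ)
    (hIET : IsIET f)
    (hdisc : ∀ x ∈ Set.Ico (0:ℝ) 1, ¬ContinuousWithinAt (⇑f) (Set.Ico (0:ℝ) 1) x → x ∈ Δ) :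
    Nonempty (IETRep Δ f) := by
  classical
  obtain ⟨hout, m, a, ha0, ha1, hmono, hpieces⟩ := hIET
  choose c hc using hpieces
  -- merging of constants at adjacent pieces whose junction is not in Δ
  have adj : ∀ (j : Fin (m+1)) (hj : 0 < j.val), a j.castSucc ∉ Δ →
      c ⟨j.val - 1, by omega⟩ = c j := by
    intro j hj hnΔ
    set p := a j.castSucc with hp
    have hp0 : 0 < p := by
      rw [hp, ← ha0]
      exact hmono (by rw [Fin.lt_def]; simp only [Fin.coe_castSucc, Fin.val_zero]; omega)
    have hp1 : p < 1 := by
      rw [hp, ← ha1]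
      exact hmono (by rw [Fin.lt_def]; simp only [Fin.coe_castSucc, Fin.val_last]; omega)
    have hcont : ContinuousWithinAt (⇑f) (Set.Ico 0 1) p := by
      by_contra h
      exact hnΔ (hdisc p ⟨hp0.le, hp1⟩ h)
    set j' : Fin (m+1) := ⟨j.val - 1, by omega⟩ with hj'
    have hj'succ : j'.succ = j.castSucc := by
      ext; simp [hj']; omega
    have hl : a j'.castSucc < p := by
      rw [hp, ← hj'succ]
      exact hmono (by simp [Fin.lt_def])
    have hsubset : Set.Ioo (a j'.castSucc) p ⊆ Set.Ico (0:ℝ) 1 := by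
      intro x hx
      constructor
      · have : a 0 ≤ a j'.castSucc := hmono.monotone (Fin.zero_le _)
        rw [ha0] at this
        linarith [hx.1]
      · linarith [hx.2]
    have hne : (nhdsWithin p (Set.Ioo (a j'.castSucc) p)).NeBot := by
      rw [nhdsWithin_Ioo_eq_nhdsLT hl]
      exact nhdsLT_neBot p
    have T1 : Filter.Tendsto (⇑f) (nhdsWithin p (Set.Ioo (a j'.castSucc) p)) (nhds (f p)) :=
      hcont.mono hsubset
    have T2 : Filter.Tendsto (⇑f) (nhdsWithin p (Set.Ioo (a j'.castSucc) p))
        (nhds (p + c j')) := by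
      have heq : ∀ x ∈ Set.Ioo (a j'.castSucc) p, f x = x + c j' := by
        intro x hx
        apply hc j'
        rw [hj'succ, ← hp]
        exact ⟨hx.1.le, hx.2⟩
      have T3 : Filter.Tendsto (fun x : ℝ => x + c j')
          (nhdsWithin p (Set.Ioo (a j'.castSucc) p)) (nhds (p + c j')) :=
        ((continuous_id.add continuous_const).tendsto p).mono_left nhdsWithin_le_nhds
      exact T3.congr' (by
        filter_upwards [self_mem_nhdsWithin] with x hx
        exact (heq x hx).symm)
    have huniq : f p = p + c j' := tendsto_nhds_unique T1 T2
    have hfp : f p = p + c j := by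
      apply hc j
      exact ⟨le_refl _, hmono (by simp [Fin.lt_def])⟩
    rw [huniq] at hfp
    linarith [hfp]
  -- merging along runs of non-Δ junctions
  have run : ∀ (d : ℕ) (i j : Fin (m+1)), j.val = i.val + d →
      (∀ k : Fin (m+1), i.val < k.val → k.val ≤ j.val → a k.castSucc ∉ Δ) → c i = c j := by
    intro d
    induction d with
    | zero =>
      intro i j hij _
      have : i = j := by ext; omega
      rw [this]
    | succ d ih =>
      intro i j hij hk
      set j' : Fin (m+1) := ⟨j.val - 1, by omega⟩ with hj'
      have h1 : c i = c j' := by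
        apply ih i j' (by simp [hj']; omega)
        intro k hk1 hk2
        exact hk k hk1 (by simp [hj'] at hk2; omega)
      have h2 : c j' = c j := by
        have := adj j (by omega) (hk j (by omega) (le_refl _))
        convert this using 2
      rw [h1, h2]
  -- the Δ-cut points
  set T₀ : Finset ℝ := (Finset.univ.image a).filter (· ∈ Δ) with hT₀
  have h0T : (0:ℝ) ∈ T₀ := by
    simp only [hT₀, Finset.mem_filter, Finset.mem_image]
    exact ⟨⟨0, Finset.mem_univ _, ha0⟩, Δ.zero_mem⟩
  have h1T : (1:ℝ) ∈ T₀ := by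
    simp only [hT₀, Finset.mem_filter, Finset.mem_image]
    exact ⟨⟨Fin.last (m+1), Finset.mem_univ _, ha1⟩, h1Δ⟩
  have hsubT : ∀ t ∈ T₀, t ∈ Set.Icc (0:ℝ) 1 := by
    intro t ht
    simp only [hT₀, Finset.mem_filter, Finset.mem_image] at ht
    obtain ⟨⟨i, _, rfl⟩, _⟩ := ht
    constructor
    · rw [← ha0]; exact hmono.monotone (Fin.zero_le _)
    · rw [← ha1]; exact hmono.monotone (Fin.le_last _)
  obtain ⟨K, b, hb0, hb1, hbmono, hbmem, hbgap⟩ := enumerate_finset T₀ h0T h1T hsubT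
  have hbΔ : ∀ i, b i ∈ Δ := by
    intro i
    have := hbmem i
    simp only [hT₀, Finset.mem_filter] at this
    exact this.2
  -- key translation property on merged pieces
  have keytrans : ∀ (j : Fin (K+1)), ∀ x ∈ Set.Ico (b j.castSucc) (b j.succ),
      f x = x + (f (b j.castSucc) - b j.castSucc) := by
    intro j x hx
    set p := b j.castSucc with hp
    have hpx : p ≤ x := hx.1
    have hxv : x < b j.succ := hx.2
    have hbj1 : b j.succ ≤ 1 := by rw [← hb1]; exact hbmono.monotone (Fin.le_last _)
    have hp0 : 0 ≤ p := by rw [hp, ← hb0]; exact hbmono.monotone (Fin.zero_le _)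
    have hp01 : p ∈ Set.Ico (0:ℝ) 1 := ⟨hp0, lt_of_lt_of_le (lt_of_le_of_lt hpx hxv) hbj1⟩
    have hx01 : x ∈ Set.Ico (0:ℝ) 1 := ⟨le_trans hp0 hpx, lt_of_lt_of_le hxv hbj1⟩
    obtain ⟨i₀, hi₀⟩ := find_gap a hmono (by rw [ha0, ha1]; exact hp01)
    obtain ⟨i₁, hi₁⟩ := find_gap a hmono (by rw [ha0, ha1]; exact hx01)
    have hle : i₀.val ≤ i₁.val := by
      by_contra h
      push_neg at h
      have : i₁.succ ≤ i₀.castSucc := by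
        rw [Fin.le_def]
        simp only [Fin.val_succ, Fin.coe_castSucc]
        omega
      have h2 : a i₁.succ ≤ a i₀.castSucc := hmono.monotone this
      linarith [hi₁.2, hi₀.1]
    have hcc : c i₀ = c i₁ := by
      apply run (i₁.val - i₀.val) i₀ i₁ (by omega)
      intro k hk1 hk2 hkΔ
      have hkT : a k.castSucc ∈ T₀ := by
        simp only [hT₀, Finset.mem_filter, Finset.mem_image]
        exact ⟨⟨k.castSucc, Finset.mem_univ _, rfl⟩, hkΔ⟩
      apply hbgap j _ hkT
      constructor
      · have h1 : a i₀.succ ≤ a k.castSucc := by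
          apply hmono.monotone
          rw [Fin.le_def]
          simp only [Fin.val_succ, Fin.coe_castSucc]
          omega
        have h2 : p < a i₀.succ := hi₀.2
        linarith
      · have h1 : a k.castSucc ≤ a i₁.castSucc := by
          apply hmono.monotone
          rw [Fin.le_def]
          simp only [Fin.coe_castSucc]
          omega
        have h2 : a i₁.castSucc ≤ x := hi₁.1
        linarith
    have hfx : f x = x + c i₁ := hc i₁ x hi₁
    have hfp : f p = p + c i₀ := hc i₀ p hi₀
    rw [hfx, hfp, hcc]
    ring
  -- the pieces
  set F : Fin (K+1) → ℝ × ℝ × ℝ :=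
    fun j => (b j.castSucc, b j.succ, f (b j.castSucc) - b j.castSucc) with hF
  set s : Finset (ℝ × ℝ × ℝ) := Finset.univ.image F with hs
  have hdisjb : ∀ (j j' : Fin (K+1)), j ≠ j' →
      Disjoint (Set.Ico (b j.castSucc) (b j.succ)) (Set.Ico (b j'.castSucc) (b j'.succ)) := by
    intro j j' hjj'
    rw [Set.Ico_disjoint_Ico]
    rcases lt_or_gt_of_ne (fun h => hjj' (by ext; exact h) : j.val ≠ j'.val) with h | h
    · have : b j.succ ≤ b j'.castSucc := by
        apply hbmono.monotone
        rw [Fin.le_def]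
        simp only [Fin.val_succ, Fin.coe_castSucc]
        omega
      calc min (b j.succ) (b j'.succ) ≤ b j.succ := min_le_left _ _
      _ ≤ b j'.castSucc := this
      _ ≤ max (b j.castSucc) (b j'.castSucc) := le_max_right _ _
    · have : b j'.succ ≤ b j.castSucc := by
        apply hbmono.monotone
        rw [Fin.le_def]
        simp only [Fin.val_succ, Fin.coe_castSucc]
        omega
      calc min (b j.succ) (b j'.succ) ≤ b j'.succ := min_le_right _ _
      _ ≤ b j.castSucc := this
      _ ≤ max (b j.castSucc) (b j'.castSucc) := le_max_left _ _
  have hsublem : ∀ j : Fin (K+1), Set.Ico (b j.castSucc) (b j.succ) ⊆ Set.Ico (0:ℝ) 1 := by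
    intro j x hx
    constructor
    · have : (0:ℝ) ≤ b j.castSucc := by rw [← hb0]; exact hbmono.monotone (Fin.zero_le _)
      linarith [hx.1]
    · have : b j.succ ≤ 1 := by rw [← hb1]; exact hbmono.monotone (Fin.le_last _)
      linarith [hx.2]
  -- rep over the trivial group, to get the constants via the tiling lemma
  have mklt : ∀ t ∈ s, t.1 < t.2.1 := by
    intro t ht
    simp only [hs, Finset.mem_image] at ht
    obtain ⟨j, _, rfl⟩ := ht
    exact hbmono (by simp [Fin.lt_def])
  have mksub : ∀ t ∈ s, Set.Ico t.1 t.2.1 ⊆ Set.Ico (0:ℝ) 1 := by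
    intro t ht
    simp only [hs, Finset.mem_image] at ht
    obtain ⟨j, _, rfl⟩ := ht
    exact hsublem j
  have mkcover : Set.Ico (0:ℝ) 1 ⊆ ⋃ t ∈ s, Set.Ico t.1 t.2.1 := by
    intro x hx
    obtain ⟨j, hj⟩ := find_gap b hbmono (by rw [hb0, hb1]; exact hx)
    simp only [Set.mem_iUnion, exists_prop]
    exact ⟨F j, by simp [hs], hj⟩
  have mkdisj : (↑s : Set (ℝ×ℝ×ℝ)).PairwiseDisjoint (fun t => Set.Ico t.1 t.2.1) := by
    intro t ht u hu htu
    simp only [hs, Finset.coe_image, Set.mem_image, Finset.mem_coe] at ht hu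
    obtain ⟨j, _, rfl⟩ := ht
    obtain ⟨j', _, rfl⟩ := hu
    have : j ≠ j' := fun h => htu (by rw [h])
    exact hdisjb j j' this
  have mktrans : ∀ t ∈ s, ∀ x ∈ Set.Ico t.1 t.2.1, f x = x + t.2.2 := by
    intro t ht x hx
    simp only [hs, Finset.mem_image] at ht
    obtain ⟨j, _, rfl⟩ := ht
    exact keytrans j x hx
  set R0 : IETRep ⊤ f :=
    ⟨s, fun t _ => AddSubgroup.mem_top _, fun t _ => AddSubgroup.mem_top _,
     fun t _ => AddSubgroup.mem_top _, mklt, mksub, mkcover, mkdisj, mktrans⟩ with hR0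
  have mem1 : ∀ t ∈ s, t.1 ∈ Δ := by
    intro t ht
    simp only [hs, Finset.mem_image] at ht
    obtain ⟨j, _, rfl⟩ := ht
    exact hbΔ _
  have mem2 : ∀ t ∈ s, t.2.1 ∈ Δ := by
    intro t ht
    simp only [hs, Finset.mem_image] at ht
    obtain ⟨j, _, rfl⟩ := ht
    exact hbΔ _
  have memc : ∀ t ∈ s, t.2.2 ∈ Δ := by
    intro t ht
    have htiling := R0.left_endpoint_eq_sum hout (t := t) (by exact ht)
    have hsum : t.1 + t.2.2 ∈ Δ := by
      rw [htiling]
      apply AddSubgroup.sum_mem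
      intro u hu
      have hu' : u ∈ s := (Finset.mem_filter.1 hu).1
      exact Δ.sub_mem (mem2 u hu') (mem1 u hu')
    have := Δ.sub_mem hsum (mem1 t ht)
    simpa using this
  exact ⟨⟨s, mem1, mem2, memc, mklt, mksub, mkcover, mkdisj, mktrans⟩⟩


theorem build_IET (Δ : AddSubgroup ℝ) (φ : Equiv.Perm ℝ)
    (hout : ∀ x : ℝ, x ∉ Set.Ico (0:ℝ) 1 → φ x = x)
    (T : Finset ℝ) (hTΔ : ∀ t ∈ T, t ∈ Δ) (h0 : (0:ℝ) ∈ T) (h1 : (1:ℝ) ∈ T)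
    (hsub : ∀ t ∈ T, t ∈ Set.Icc (0:ℝ) 1)
    (hgap : ∀ u v : ℝ, u ∈ T → v ∈ T → u < v → (∀ t ∈ T, t ∉ Set.Ioo u v) →
      ∃ cc : ℝ, ∀ x ∈ Set.Ico u v, φ x = x + cc) :
    IsIET φ ∧ ∀ x ∈ Set.Ico (0:ℝ) 1, ¬ContinuousWithinAt (⇑φ) (Set.Ico (0:ℝ) 1) x → x ∈ Δ := by
  obtain ⟨m, a, ha0, ha1, hmono, hmem, hnogap⟩ := enumerate_finset T h0 h1 hsub
  have hgap' : ∀ i : Fin (m+1), ∃ cc : ℝ, ∀ x ∈ Set.Ico (a i.castSucc) (a i.succ),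
      φ x = x + cc := by
    intro i
    exact hgap (a i.castSucc) (a i.succ) (hmem _) (hmem _)
      (hmono (by rw [Fin.lt_def]; simp))
      (fun t ht hin => hnogap i t ht hin)
  refine ⟨⟨hout, m, a, ha0, ha1, hmono, hgap'⟩, ?_⟩
  intro x hx hnc
  by_contra hxΔ
  apply hnc
  have hxT : x ∉ T := fun h => hxΔ (hTΔ x h)
  obtain ⟨i, hi⟩ := find_gap a hmono (by rw [ha0, ha1]; exact hx)
  have hxne : x ≠ a i.castSucc := by
    intro h
    exact hxT (h ▸ hmem i.castSucc)
  have hxIoo : x ∈ Set.Ioo (a i.castSucc) (a i.succ) :=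
    ⟨lt_of_le_of_ne hi.1 (Ne.symm hxne), hi.2⟩
  obtain ⟨cc, hcc⟩ := hgap' i
  have hev : (fun y : ℝ => y + cc) =ᶠ[nhds x] ⇑φ := by
    filter_upwards [isOpen_Ioo.mem_nhds hxIoo] with y hy
    exact (hcc y ⟨hy.1.le, hy.2⟩).symm
  have hca : ContinuousAt (⇑φ) x :=
    ContinuousAt.congr ((continuous_id.add continuous_const).continuousAt) hev
  exact hca.continuousWithinAt


open MeasureTheory in
/-- For `f ∈ Γ_α(J)` there is an involution `i ∈ Γ_α(J)` with
`|Fix(i ∘ f) ∩ J| ≥ |Fix(f) ∩ J| + (|J| - |Fix(f) ∩ J|)(1 - ε)/5`. -/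
theorem exists_involution_increasing_fixed_set (p : ℕ) (α : Fin (p + 1) → ℝ)
    (hα : ∀ i, α i ∈ Set.Ico (0 : ℝ) 1) (hirr : Irrational (α 0))
    (ε : ℝ) (hε : ε ∈ Set.Ioo (0 : ℝ) 1)
    (c d : ℝ) (hc : c ∈ Delta α) (hd : d ∈ Delta α)
    (h0c : 0 ≤ c) (hcd : c < d) (hd1 : d ≤ 1)
    (f : Equiv.Perm ℝ) (hf : MemGammaJ (Delta α) c d f) :
    ∃ i : Equiv.Perm ℝ, MemGammaJ (Delta α) c d i ∧ i * i = 1 ∧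
      (volume {x ∈ Set.Ico c d | (i * f) x = x}).toReal ≥
        (volume {x ∈ Set.Ico c d | f x = x}).toReal +
          ((d - c) - (volume {x ∈ Set.Ico c d | f x = x}).toReal) * (1 - ε) / 5 := by
  classical
  set Δ := Delta α with hΔdef
  have h1Δ : (1:ℝ) ∈ Δ := AddSubgroup.subset_closure (Or.inr rfl)
  obtain ⟨hIET, hsupp, hdisc⟩ := hf
  have hout : ∀ x : ℝ, x ∉ Set.Ico (0:ℝ) 1 → f x = x := hIET.1
  obtain ⟨R⟩ := exists_rep f Δ h1Δ hIET hdisc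
  have hout' : ∀ x : ℝ, x ∉ Set.Ico (0:ℝ) 1 → f.symm x = x := fun x hx => perm_symm_out hout hx
  set S : Set ℝ := {x | f x ≠ x} with hSdef
  set Pp : Set ℝ := {x | x < f x} with hPpdef
  set Pm : Set ℝ := {x | f x < x} with hPmdef
  have hScd : S ⊆ Set.Ico c d := by
    intro x hx
    by_contra h
    exact hx (hsupp x h)
  have hcd01 : Set.Ico c d ⊆ Set.Ico (0:ℝ) 1 := fun x hx =>
    ⟨le_trans h0c hx.1, lt_of_lt_of_le hx.2 hd1⟩
  have hS01 : S ⊆ Set.Ico (0:ℝ) 1 := hScd.trans hcd01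
  have hSeq : S = Pp ∪ Pm := by
    ext x
    simp only [hSdef, hPpdef, hPmdef, Set.mem_setOf_eq, Set.mem_union]
    constructor
    · intro h
      rcases h.lt_or_gt with h' | h'
      exacts [Or.inr h', Or.inl h']
    · rintro (h | h)
      exacts [h.ne', h.ne]
  have hPpnice : NiceSet Δ Pp := R.posPart_nice hout
  have hPpsub : Pp ⊆ Set.Ico (0:ℝ) 1 := R.posPart_sub hout
  set Rs := R.symm hout with hRs
  have hQnice : NiceSet Δ {x : ℝ | x < f.symm x} := Rs.posPart_nice hout'
  have hQsub : {x : ℝ | x < f.symm x} ⊆ Set.Ico (0:ℝ) 1 := Rs.posPart_sub hout'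
  have hPmsub : Pm ⊆ Set.Ico (0:ℝ) 1 := by
    intro x hx
    apply hS01
    rw [hSeq]
    exact Or.inr hx
  have hQeq : {x : ℝ | x < f.symm x} = f '' Pm := by
    ext y
    simp only [Set.mem_setOf_eq, Set.mem_image, hPmdef]
    constructor
    · intro hy
      refine ⟨f.symm y, ?_, f.apply_symm_apply y⟩
      show f (f.symm y) < f.symm y
      rw [f.apply_symm_apply]
      exact hy
    · rintro ⟨z, hz, rfl⟩
      rw [f.symm_apply_apply]
      exact hz
  have hPmfromQ : Pm = f.symm '' {x : ℝ | x < f.symm x} := by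
    rw [hQeq]
    ext z
    simp only [Set.mem_image, hPmdef, Set.mem_setOf_eq]
    constructor
    · intro hz
      exact ⟨f z, ⟨z, hz, rfl⟩, f.symm_apply_apply z⟩
    · rintro ⟨w, ⟨z', hz', rfl⟩, rfl⟩
      rw [f.symm_apply_apply]
      exact hz'
  have hPmnice : NiceSet Δ Pm := by
    rw [hPmfromQ]
    exact Rs.image_nice hQsub hQnice
  have hSnice : NiceSet Δ S := by rw [hSeq]; exact hPpnice.union hPmnice
  have hSmeas : MeasurableSet S := hSnice.measurableSet
  have hQvol : volume {x : ℝ | x < f.symm x} = volume Pm := by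
    rw [hQeq]
    exact R.image_volume hPmsub hPmnice.measurableSet
  -- the set A
  obtain ⟨A, hAnice, hAS, hAdisj, hAvolS⟩ :
      ∃ A : Set ℝ, NiceSet Δ A ∧ A ⊆ S ∧ (∀ y ∈ A, f y ∉ A) ∧
        volume S ≤ 4 * volume A := by
    rcases le_total (volume Pm) (volume Pp) with hcase | hcase
    · obtain ⟨A, hAn, hAP, hAd, hAv⟩ := R.exists_half hout
      refine ⟨A, hAn, ?_, hAd, ?_⟩
      · intro x hx
        exact (hAP hx).ne'
      · calc volume S = volume (Pp ∪ Pm) := by rw [hSeq]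
        _ ≤ volume Pp + volume Pm := measure_union_le _ _
        _ ≤ volume Pp + volume Pp := add_le_add_right hcase _
        _ = 2 * volume Pp := by ring
        _ ≤ 2 * (2 * volume A) := by exact mul_le_mul_right hAv 2
        _ = 4 * volume A := by ring
    · obtain ⟨A', hAn', hAP', hAd', hAv'⟩ := Rs.exists_half hout'
      have hA'sub : A' ⊆ Set.Ico (0:ℝ) 1 := hAP'.trans hQsub
      refine ⟨f.symm '' A', Rs.image_nice hA'sub hAn', ?_, ?_, ?_⟩
      · rintro x ⟨y, hy, rfl⟩
        have : y < f.symm y := hAP' hy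
        show f (f.symm y) ≠ f.symm y
        rw [f.apply_symm_apply]
        exact ne_of_lt this
      · rintro z ⟨w, hw, rfl⟩ hz
        rw [f.apply_symm_apply] at hz
        obtain ⟨u, hu, huw⟩ := hz
        have := hAd' u hu
        rw [huw] at this
        exact this hw
      · have hvolA : volume (f.symm '' A') = volume A' :=
          Rs.image_volume hA'sub hAn'.measurableSet
        calc volume S = volume (Pp ∪ Pm) := by rw [hSeq]
        _ ≤ volume Pp + volume Pm := measure_union_le _ _
        _ ≤ volume Pm + volume Pm := add_le_add_left hcase _
        _ = 2 * volume Pm := by ring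
        _ = 2 * volume {x : ℝ | x < f.symm x} := by rw [hQvol]
        _ ≤ 2 * (2 * volume A') := by exact mul_le_mul_right hAv' 2
        _ = 4 * volume (f.symm '' A') := by rw [hvolA]; ring
  have hA01 : A ⊆ Set.Ico (0:ℝ) 1 := hAS.trans hS01
  have hAcd : A ⊆ Set.Ico c d := hAS.trans hScd
  have hfAcd : ∀ y ∈ A, f y ∈ Set.Ico c d := by
    intro y hy
    by_contra h
    have h2 : f (f y) = f y := hsupp _ h
    have h3 : f y = y := f.injective h2
    exact (hAS hy) h3
  set FA : Set ℝ := f '' A with hFAdef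
  have hFA01 : FA ⊆ Set.Ico (0:ℝ) 1 := by
    rintro x ⟨y, hy, rfl⟩
    exact perm_maps_Ico hout (hA01 hy)
  have hFAA : ∀ x ∈ FA, x ∉ A := by
    rintro x ⟨y, hy, rfl⟩
    exact hAdisj y hy
  -- representations
  obtain ⟨sA, hsAmem, hsAeq⟩ := hAnice
  obtain ⟨sA', hsA'mem, hsA'eq, hsA'orig⟩ := clip_rep sA hsAmem hsAeq hA01
  have hmaxΔ : ∀ {a b : ℝ}, a ∈ Δ → b ∈ Δ → max a b ∈ Δ := by
    intro a b ha hb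
    rcases max_choice a b with h | h <;> rw [h] <;> assumption
  have hminΔ : ∀ {a b : ℝ}, a ∈ Δ → b ∈ Δ → min a b ∈ Δ := by
    intro a b ha hb
    rcases min_choice a b with h | h <;> rw [h] <;> assumption
  set G : (ℝ × ℝ) × (ℝ × ℝ × ℝ) → ℝ × ℝ :=
    fun q => (max q.1.1 q.2.1 + q.2.2.2, min q.1.2 q.2.2.1 + q.2.2.2) with hGdef
  set sFA : Finset (ℝ × ℝ) := (sA' ×ˢ R.s).image G with hsFAdef
  have hsFAmem : ∀ q ∈ sFA, q.1 ∈ Δ ∧ q.2 ∈ Δ := by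
    intro q hq
    simp only [hsFAdef, Finset.mem_image, Finset.mem_product] at hq
    obtain ⟨r, ⟨hr1, hr2⟩, rfl⟩ := hq
    constructor
    · exact Δ.add_mem (hmaxΔ ((hsA'mem r.1 hr1).1.1) (R.mem1 r.2 hr2)) (R.memc r.2 hr2)
    · exact Δ.add_mem (hminΔ ((hsA'mem r.1 hr1).1.2) (R.mem2 r.2 hr2)) (R.memc r.2 hr2)
  have hsFAeq : FA = ⋃ q ∈ sFA, Set.Ico q.1 q.2 := by
    ext x
    simp only [Set.mem_iUnion, exists_prop, hsFAdef, Finset.mem_image, Finset.mem_product]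
    constructor
    · rintro ⟨y, hy, rfl⟩
      obtain ⟨pa, hpa, hypa⟩ : ∃ pa ∈ sA', y ∈ Set.Ico pa.1 pa.2 := by
        have := hsA'eq ▸ hy
        simpa only [Set.mem_iUnion, exists_prop] using this
      obtain ⟨t, ht, hyt⟩ : ∃ t ∈ R.s, y ∈ Set.Ico t.1 t.2.1 := by
        have := R.cover (hA01 hy)
        simpa only [Set.mem_iUnion, exists_prop] using this
      refine ⟨G (pa, t), ⟨(pa, t), ⟨hpa, ht⟩, rfl⟩, ?_⟩
      rw [R.trans t ht y hyt]
      simp only [hGdef, Set.mem_Ico]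
      constructor
      · have := max_le hypa.1 hyt.1
        linarith
      · have := lt_min hypa.2 hyt.2
        linarith
    · rintro ⟨q, ⟨⟨pa, t⟩, ⟨hpa, ht⟩, rfl⟩, hx⟩
      simp only [hGdef, Set.mem_Ico] at hx
      set y := x - t.2.2 with hy
      have hymax : max pa.1 t.1 ≤ y := by rw [hy]; linarith [hx.1]
      have hymin : y < min pa.2 t.2.1 := by rw [hy]; linarith [hx.2]
      have hyA : y ∈ A := by
        rw [hsA'eq]
        refine Set.mem_biUnion hpa ⟨?_, ?_⟩
        · exact le_trans (le_max_left _ _) hymax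
        · exact lt_of_lt_of_le hymin (min_le_left _ _)
      have hyt : y ∈ Set.Ico t.1 t.2.1 :=
        ⟨le_trans (le_max_right _ _) hymax, lt_of_lt_of_le hymin (min_le_right _ _)⟩
      refine ⟨y, hyA, ?_⟩
      rw [R.trans t ht y hyt, hy]
      ring
  obtain ⟨sFA', hsFA'mem, hsFA'eq, hsFA'orig⟩ := clip_rep sFA hsFAmem hsFAeq hFA01
  -- the involution
  set φm : ℝ → ℝ := fun x => if x ∈ A then f x else if f.symm x ∈ A then f.symm x else x
    with hφm
  have hφmA : ∀ x ∈ A, φm x = f x := by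
    intro x hx
    simp only [hφm, if_pos hx]
  have hφmFA : ∀ x, x ∉ A → f.symm x ∈ A → φm x = f.symm x := by
    intro x hx1 hx2
    simp only [hφm, if_neg hx1, if_pos hx2]
  have hφmid : ∀ x, x ∉ A → f.symm x ∉ A → φm x = x := by
    intro x hx1 hx2
    simp only [hφm, if_neg hx1, if_neg hx2]
  have hinv : ∀ x, φm (φm x) = x := by
    intro x
    by_cases hx : x ∈ A
    · rw [hφmA x hx]
      have h1 : f x ∉ A := hAdisj x hx
      have h2 : f.symm (f x) ∈ A := by rw [f.symm_apply_apply]; exact hx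
      rw [hφmFA _ h1 h2, f.symm_apply_apply]
    · by_cases hx2 : f.symm x ∈ A
      · rw [hφmFA x hx hx2, hφmA _ hx2, f.apply_symm_apply]
      · rw [hφmid x hx hx2, hφmid x hx hx2]
  set i : Equiv.Perm ℝ := ⟨φm, φm, hinv, hinv⟩ with hidef
  have hiapp : ∀ x, i x = φm x := fun x => rfl
  have hii : i * i = 1 := by
    ext x
    simp only [Equiv.Perm.mul_apply, Equiv.Perm.one_apply, hiapp]
    exact hinv x
  have hiout : ∀ x : ℝ, x ∉ Set.Ico c d → i x = x := by
    intro x hx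
    rw [hiapp]
    apply hφmid
    · exact fun h => hx (hAcd h)
    · intro h
      have : f (f.symm x) ∈ Set.Ico c d := hfAcd _ h
      rw [f.apply_symm_apply] at this
      exact hx this
  have hiout01 : ∀ x : ℝ, x ∉ Set.Ico (0:ℝ) 1 → i x = x := fun x hx =>
    hiout x (fun h => hx (hcd01 h))
  -- the cut points
  set T : Finset ℝ := ({0, 1} : Finset ℝ) ∪ sA'.image Prod.fst ∪ sA'.image Prod.snd ∪
    sFA'.image Prod.fst ∪ sFA'.image Prod.snd ∪ R.s.image (fun t => t.1) ∪
    R.s.image (fun t => t.2.1) with hTdef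
  have hmemT : ∀ x : ℝ, x ∈ T ↔ (x = 0 ∨ x = 1) ∨ (∃ p ∈ sA', p.1 = x) ∨
      (∃ p ∈ sA', p.2 = x) ∨ (∃ p ∈ sFA', p.1 = x) ∨ (∃ p ∈ sFA', p.2 = x) ∨
      (∃ t ∈ R.s, t.1 = x) ∨ (∃ t ∈ R.s, t.2.1 = x) := by
    intro x
    constructor
    · intro hx
      simp only [hTdef, Finset.mem_union] at hx
      rcases hx with ((((((hx | hx) | hx) | hx) | hx) | hx) | hx)
      · simp only [Finset.mem_insert, Finset.mem_singleton] at hx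
        exact Or.inl hx
      · obtain ⟨p, hp, rfl⟩ := Finset.mem_image.1 hx
        exact Or.inr (Or.inl ⟨p, hp, rfl⟩)
      · obtain ⟨p, hp, rfl⟩ := Finset.mem_image.1 hx
        exact Or.inr (Or.inr (Or.inl ⟨p, hp, rfl⟩))
      · obtain ⟨p, hp, rfl⟩ := Finset.mem_image.1 hx
        exact Or.inr (Or.inr (Or.inr (Or.inl ⟨p, hp, rfl⟩)))
      · obtain ⟨p, hp, rfl⟩ := Finset.mem_image.1 hx
        exact Or.inr (Or.inr (Or.inr (Or.inr (Or.inl ⟨p, hp, rfl⟩))))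
      · obtain ⟨u, hu, rfl⟩ := Finset.mem_image.1 hx
        exact Or.inr (Or.inr (Or.inr (Or.inr (Or.inr (Or.inl ⟨u, hu, rfl⟩)))))
      · obtain ⟨u, hu, rfl⟩ := Finset.mem_image.1 hx
        exact Or.inr (Or.inr (Or.inr (Or.inr (Or.inr (Or.inr ⟨u, hu, rfl⟩)))))
    · intro hx
      simp only [hTdef, Finset.mem_union]
      rcases hx with (hx | hx) | ⟨p, hp, rfl⟩ | ⟨p, hp, rfl⟩ | ⟨p, hp, rfl⟩ | ⟨p, hp, rfl⟩ |
        ⟨u, hu, rfl⟩ | ⟨u, hu, rfl⟩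
      · refine Or.inl (Or.inl (Or.inl (Or.inl (Or.inl (Or.inl ?_)))))
        simp only [Finset.mem_insert, Finset.mem_singleton]
        exact Or.inl hx
      · refine Or.inl (Or.inl (Or.inl (Or.inl (Or.inl (Or.inl ?_)))))
        simp only [Finset.mem_insert, Finset.mem_singleton]
        exact Or.inr hx
      · exact Or.inl (Or.inl (Or.inl (Or.inl (Or.inl (Or.inr (Finset.mem_image.2 ⟨p, hp, rfl⟩))))))
      · exact Or.inl (Or.inl (Or.inl (Or.inl (Or.inr (Finset.mem_image.2 ⟨p, hp, rfl⟩)))))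
      · exact Or.inl (Or.inl (Or.inl (Or.inr (Finset.mem_image.2 ⟨p, hp, rfl⟩))))
      · exact Or.inl (Or.inl (Or.inr (Finset.mem_image.2 ⟨p, hp, rfl⟩)))
      · exact Or.inl (Or.inr (Finset.mem_image.2 ⟨u, hu, rfl⟩))
      · exact Or.inr (Finset.mem_image.2 ⟨u, hu, rfl⟩)
  have hTΔ : ∀ t ∈ T, t ∈ Δ := by
    intro t ht
    rw [hmemT] at ht
    rcases ht with (rfl | rfl) | ⟨p, hp, rfl⟩ | ⟨p, hp, rfl⟩ | ⟨p, hp, rfl⟩ | ⟨p, hp, rfl⟩ |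
      ⟨u, hu, rfl⟩ | ⟨u, hu, rfl⟩
    · exact Δ.zero_mem
    · exact h1Δ
    · exact (hsA'mem p hp).1.1
    · exact (hsA'mem p hp).1.2
    · exact (hsFA'mem p hp).1.1
    · exact (hsFA'mem p hp).1.2
    · exact R.mem1 u hu
    · exact R.mem2 u hu
  have h0T : (0:ℝ) ∈ T := (hmemT 0).2 (Or.inl (Or.inl rfl))
  have h1T : (1:ℝ) ∈ T := (hmemT 1).2 (Or.inl (Or.inr rfl))
  have hsubT : ∀ t ∈ T, t ∈ Set.Icc (0:ℝ) 1 := by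
    intro t ht
    rw [hmemT] at ht
    rcases ht with (rfl | rfl) | ⟨p, hp, rfl⟩ | ⟨p, hp, rfl⟩ | ⟨p, hp, rfl⟩ | ⟨p, hp, rfl⟩ |
      ⟨u, hu, rfl⟩ | ⟨u, hu, rfl⟩
    · norm_num
    · norm_num
    · exact (hsA'mem p hp).2.1
    · exact (hsA'mem p hp).2.2
    · exact (hsFA'mem p hp).2.1
    · exact (hsFA'mem p hp).2.2
    · obtain ⟨h1, h2⟩ := ico_bounds (R.lt u hu) (R.sub u hu)
      exact ⟨h1, le_of_lt (lt_of_lt_of_le (R.lt u hu) h2)⟩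
    · obtain ⟨h1, h2⟩ := ico_bounds (R.lt u hu) (R.sub u hu)
      exact ⟨le_trans h1 (R.lt u hu).le, h2⟩
  -- the gap condition
  have hgap : ∀ u v : ℝ, u ∈ T → v ∈ T → u < v → (∀ t ∈ T, t ∉ Set.Ioo u v) →
      ∃ cc : ℝ, ∀ x ∈ Set.Ico u v, i x = x + cc := by
    intro u v huT hvT huv hno
    have hu01 : u ∈ Set.Ico (0:ℝ) 1 :=
      ⟨(hsubT u huT).1, lt_of_lt_of_le huv (hsubT v hvT).2⟩
    have hGsub01 : Set.Ico u v ⊆ Set.Ico (0:ℝ) 1 := fun x hx =>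
      ⟨le_trans hu01.1 hx.1, lt_of_lt_of_le hx.2 (hsubT v hvT).2⟩
    obtain ⟨t, ht, hut⟩ : ∃ t ∈ R.s, u ∈ Set.Ico t.1 t.2.1 := by
      have := R.cover hu01
      simpa only [Set.mem_iUnion, exists_prop] using this
    have hGt : Set.Ico u v ⊆ Set.Ico t.1 t.2.1 := by
      have hvt : v ≤ t.2.1 := by
        by_contra h
        push_neg at h
        exact hno t.2.1 ((hmemT t.2.1).2
          (Or.inr (Or.inr (Or.inr (Or.inr (Or.inr (Or.inr ⟨t, ht, rfl⟩))))))) ⟨hut.2, h⟩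
      intro x hx
      exact ⟨le_trans hut.1 hx.1, lt_of_lt_of_le hx.2 hvt⟩
    have hTset : ∀ p ∈ sA', p.1 ∈ (↑T : Set ℝ) ∧ p.2 ∈ (↑T : Set ℝ) := by
      intro p hp
      constructor
      · show p.1 ∈ T
        exact (hmemT p.1).2 (Or.inr (Or.inl ⟨p, hp, rfl⟩))
      · show p.2 ∈ T
        exact (hmemT p.2).2 (Or.inr (Or.inr (Or.inl ⟨p, hp, rfl⟩)))
    have hTset2 : ∀ p ∈ sFA', p.1 ∈ (↑T : Set ℝ) ∧ p.2 ∈ (↑T : Set ℝ) := by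
      intro p hp
      constructor
      · show p.1 ∈ T
        exact (hmemT p.1).2 (Or.inr (Or.inr (Or.inr (Or.inl ⟨p, hp, rfl⟩))))
      · show p.2 ∈ T
        exact (hmemT p.2).2 (Or.inr (Or.inr (Or.inr (Or.inr (Or.inl ⟨p, hp, rfl⟩)))))
    have hnoset : ∀ x ∈ (↑T : Set ℝ), x ∉ Set.Ioo u v := fun x hx => hno x hx
    rcases gap_dichotomy hsA'eq hTset hnoset with hGA | hGA
    · refine ⟨t.2.2, fun x hx => ?_⟩
      rw [hiapp, hφmA x (hGA hx)]
      exact R.trans t ht x (hGt hx)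
    · have hnotA : ∀ x ∈ Set.Ico u v, x ∉ A := by
        intro x hx h
        exact absurd hGA (by
          apply Set.nonempty_iff_ne_empty.1
          exact ⟨x, hx, h⟩)
      rcases gap_dichotomy hsFA'eq hTset2 hnoset with hGFA | hGFA
      · -- the gap is inside f '' A
        have hune : u ∈ FA := hGFA ⟨le_refl u, huv⟩
        obtain ⟨q, hq, huq⟩ : ∃ q ∈ sFA', u ∈ Set.Ico q.1 q.2 := by
          have := hsFA'eq ▸ hune
          simpa only [Set.mem_iUnion, exists_prop] using this
        have hGq : Set.Ico u v ⊆ Set.Ico q.1 q.2 := by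
          have hq2 : v ≤ q.2 := by
            by_contra h
            push_neg at h
            exact hno q.2 ((hmemT q.2).2 (Or.inr (Or.inr (Or.inr (Or.inr
              (Or.inl ⟨q, hq, rfl⟩)))))) ⟨huq.2, h⟩
          intro x hx
          exact ⟨le_trans huq.1 hx.1, lt_of_lt_of_le hx.2 hq2⟩
        obtain ⟨⟨pa, t'⟩, hqprod, hqeq⟩ : ∃ r ∈ (sA' ×ˢ R.s), G r = q := by
          have := hsFA'orig q hq ⟨u, huq⟩
          simpa only [hsFAdef, Finset.mem_image] using this
        obtain ⟨hpa, ht'⟩ := Finset.mem_product.1 hqprod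
        refine ⟨-t'.2.2, fun x hx => ?_⟩
        have hxq : x ∈ Set.Ico q.1 q.2 := hGq hx
        rw [← hqeq] at hxq
        simp only [hGdef, Set.mem_Ico] at hxq
        set y := x - t'.2.2 with hy
        have hymax : max pa.1 t'.1 ≤ y := by rw [hy]; linarith [hxq.1]
        have hymin : y < min pa.2 t'.2.1 := by rw [hy]; linarith [hxq.2]
        have hyA : y ∈ A := by
          rw [hsA'eq]
          refine Set.mem_biUnion hpa ⟨?_, ?_⟩
          · exact le_trans (le_max_left _ _) hymax
          · exact lt_of_lt_of_le hymin (min_le_left _ _)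
        have hyt : y ∈ Set.Ico t'.1 t'.2.1 :=
          ⟨le_trans (le_max_right _ _) hymax, lt_of_lt_of_le hymin (min_le_right _ _)⟩
        have hfy : f y = x := by rw [R.trans t' ht' y hyt, hy]; ring
        have hsymmx : f.symm x = y := by rw [← hfy, f.symm_apply_apply]
        rw [hiapp, hφmFA x (hnotA x hx) (by rw [hsymmx]; exact hyA), hsymmx, hy]
        ring
      · -- the gap misses both A and f '' A
        refine ⟨0, fun x hx => ?_⟩
        rw [hiapp, add_zero]
        apply hφmid x (hnotA x hx)
        intro h
        have hxFA : x ∈ FA := ⟨f.symm x, h, f.apply_symm_apply x⟩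
        exact absurd hGFA (by
          apply Set.nonempty_iff_ne_empty.1
          exact ⟨x, hx, hxFA⟩)
  obtain ⟨hiIET, hidisc⟩ := build_IET Δ i hiout01 T hTΔ h0T h1T hsubT hgap
  refine ⟨i, ⟨hiIET, hiout, hidisc⟩, hii, ?_⟩
  -- the measure estimate
  set Fixf : Set ℝ := Set.Ico c d \ S with hFixfdef
  have hFixf_eq : {x | x ∈ Set.Ico c d ∧ f x = x} = Fixf := by
    ext x
    simp only [hFixfdef, Set.mem_setOf_eq, Set.mem_diff, hSdef, not_not]
  have hFixf_meas : MeasurableSet Fixf := measurableSet_Ico.diff hSmeas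
  have hsub2 : Fixf ∪ A ⊆ {x | x ∈ Set.Ico c d ∧ (i * f) x = x} := by
    intro x hx
    rcases hx with hx | hx
    · obtain ⟨hx1, hx2⟩ := hx
      have hfx : f x = x := not_not.1 hx2
      refine ⟨hx1, ?_⟩
      rw [Equiv.Perm.mul_apply, hfx, hiapp]
      apply hφmid
      · intro h
        exact (hAS h) hfx
      · intro h
        have hxFA : x ∈ FA := ⟨f.symm x, h, f.apply_symm_apply x⟩
        obtain ⟨y, hy, rfl⟩ := hxFA
        have h2 : f y = y := f.injective hfx
        exact (hAS hy) h2
    · refine ⟨hAcd hx, ?_⟩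
      rw [Equiv.Perm.mul_apply, hiapp]
      have h1 : f x ∉ A := hAdisj x hx
      have h2 : f.symm (f x) ∈ A := by rw [f.symm_apply_apply]; exact hx
      rw [hφmFA _ h1 h2, f.symm_apply_apply]
  have hdisj2 : Disjoint Fixf A := by
    rw [Set.disjoint_left]
    intro x hx hxA
    exact hx.2 (hAS hxA)
  have hAmeas : MeasurableSet A := by
    have : NiceSet Δ A := ⟨sA, hsAmem, hsAeq⟩
    exact this.measurableSet
  have hIcofin : volume (Set.Ico c d) ≠ ⊤ := by
    rw [Real.volume_Ico]
    exact ENNReal.ofReal_ne_top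
  have hgoalsub : {x | x ∈ Set.Ico c d ∧ (i * f) x = x} ⊆ Set.Ico c d := fun x hx => hx.1
  have hsplit : volume (Set.Ico c d) = volume Fixf + volume S := by
    have hu : Set.Ico c d = Fixf ∪ S := (Set.diff_union_of_subset hScd).symm
    rw [hu]
    exact measure_union (by
      rw [Set.disjoint_left]
      intro x hx hxS
      exact hx.2 hxS) hSmeas
  have hvol2 : volume Fixf + volume A ≤ volume {x | x ∈ Set.Ico c d ∧ (i * f) x = x} := by
    rw [← measure_union hdisj2 hAmeas]
    exact measure_mono hsub2
  -- pass to real numbers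
  have hFixf_fin : volume Fixf ≠ ⊤ :=
    (lt_of_le_of_lt (measure_mono (Set.diff_subset)) (lt_top_iff_ne_top.2 hIcofin)).ne
  have hS_fin : volume S ≠ ⊤ :=
    (lt_of_le_of_lt (measure_mono hScd) (lt_top_iff_ne_top.2 hIcofin)).ne
  have hA_fin : volume A ≠ ⊤ :=
    (lt_of_le_of_lt (measure_mono hAcd) (lt_top_iff_ne_top.2 hIcofin)).ne
  have hgoal_fin : volume {x | x ∈ Set.Ico c d ∧ (i * f) x = x} ≠ ⊤ :=
    (lt_of_le_of_lt (measure_mono hgoalsub) (lt_top_iff_ne_top.2 hIcofin)).ne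
  rw [hFixf_eq]
  set VF := (volume Fixf).toReal with hVF
  set VA := (volume A).toReal with hVA
  set VS := (volume S).toReal with hVS
  set VI := (volume {x | x ∈ Set.Ico c d ∧ (i * f) x = x}).toReal with hVI
  have hrVI : VF + VA ≤ VI := by
    rw [hVF, hVA, hVI, ← ENNReal.toReal_add hFixf_fin hA_fin]
    exact ENNReal.toReal_mono hgoal_fin hvol2
  have hrVS : VS ≤ 4 * VA := by
    rw [hVS, hVA]
    calc (volume S).toReal ≤ (4 * volume A).toReal :=
      ENNReal.toReal_mono (by
        apply ENNReal.mul_ne_top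
        · exact ENNReal.ofNat_ne_top
        · exact hA_fin) hAvolS
    _ = 4 * (volume A).toReal := by
        rw [ENNReal.toReal_mul]
        norm_num
  have hrtot : VF + VS = d - c := by
    have := congrArg ENNReal.toReal hsplit
    rw [Real.volume_Ico, ENNReal.toReal_ofReal (by linarith), ENNReal.toReal_add hFixf_fin hS_fin]
      at this
    rw [hVF, hVS]
    linarith [this]
  have hVSnn : 0 ≤ VS := ENNReal.toReal_nonneg
  have hVAnn : 0 ≤ VA := ENNReal.toReal_nonneg
  -- final arithmetic
  show VI ≥ VF + ((d - c) - VF) * (1 - ε) / 5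
  have hds : (d - c) - VF = VS := by linarith
  rw [hds]
  have hεles : VS * (1 - ε) / 5 ≤ VA := by
    nlinarith [hε.1, hε.2, mul_nonneg hVSnn hε.1.le]
  linarith
end
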